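/- arXiv:1805.11275 — 11 statements merged into one kernel-verified Lean document; each statement's English description precedes it below -/
import Mathlib

section
/- Let G be a graph and X a subset of its vertices. The number of consistent cuts of X equals 2 raised to the number of connected components of G[X]. -/
/-- The set of consistent cuts of a finite vertex set `X`: ordered pairs `(X1, X2)` with
`X1 ∪ X2 = X`, `X1 ∩ X2 = ∅`, and no edge of `G` between `X1` and `X2`. -/
def ccut {V : Type*} [DecidableEq V] (G : SimpleGraph V) [DecidableRel G.Adj]
    (X : Finset V) : Finset (Finset V × Finset V) :=
  (X.powerset ×ˢ X.powerset).filter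
    (fun p => p.1 ∪ p.2 = X ∧ p.1 ∩ p.2 = ∅ ∧ ∀ x ∈ p.1, ∀ y ∈ p.2, ¬ G.Adj x y)

section Aux
variable {V : Type*} [Fintype V] [DecidableEq V]
    (G : SimpleGraph V) [DecidableRel G.Adj] (X : Finset V)

local notation "GX" => G.induce (X : Set V)

lemma ccut_mem_iff (p : Finset V × Finset V) :
    p ∈ ccut G X ↔ p.1 ∪ p.2 = X ∧ p.1 ∩ p.2 = ∅ ∧
      ∀ x ∈ p.1, ∀ y ∈ p.2, ¬ G.Adj x y := by
  unfold ccut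
  simp only [Finset.mem_filter, Finset.mem_product, Finset.mem_powerset]
  constructor
  · tauto
  · intro h
    refine ⟨⟨?_, ?_⟩, h⟩
    · exact h.1 ▸ Finset.subset_union_left
    · exact h.1 ▸ Finset.subset_union_right

lemma ccut_const (p : Finset V × Finset V) (hp : p ∈ ccut G X)
    (u w : (X : Set V)) (h : (GX).Reachable u w) :
    (u.1 ∈ p.1) = (w.1 ∈ p.1) := by
  obtain ⟨hu, hd, hadj⟩ := (ccut_mem_iff G X p).mp hp
  obtain ⟨q⟩ := h
  induction q with
  | nil => rfl
  | @cons a b c hab _ ih =>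
    rw [← ih]
    -- a b adjacent in induced graph
    have hGab : G.Adj a.1 b.1 := hab
    have haX : a.1 ∈ X := a.2
    have hbX : b.1 ∈ X := b.2
    have hsplit : ∀ x, x ∈ X → (x ∈ p.1 ∨ x ∈ p.2) := by
      intro x hx
      rw [← hu] at hx
      exact Finset.mem_union.mp hx
    have hnot : ∀ x, ¬ (x ∈ p.1 ∧ x ∈ p.2) := by
      intro x hx
      have : x ∈ p.1 ∩ p.2 := Finset.mem_inter.mpr hx
      simp [hd] at this
    by_cases h1 : a.1 ∈ p.1 <;> by_cases h2 : b.1 ∈ p.1 <;> simp [h1, h2]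
    · rcases hsplit b.1 hbX with h | h
      · exact h2 h
      · exact hadj a.1 h1 b.1 h hGab
    · rcases hsplit a.1 haX with h | h
      · exact h1 h
      · exact hadj b.1 h2 a.1 h hGab.symm

noncomputable def ccutEquiv :
    {p // p ∈ ccut G X} ≃ ((GX).ConnectedComponent → Bool) where
  toFun p := SimpleGraph.ConnectedComponent.lift (fun v => decide (v.1 ∈ p.1.1))
    (fun v w q _ => by
      have := ccut_const G X p.1 p.2 v w ⟨q⟩
      simp [this])
  invFun f := ⟨(X.filter (fun x => if h : x ∈ X then
      f ((GX).connectedComponentMk ⟨x, Finset.mem_coe.mpr h⟩) = true else False),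
      X.filter (fun x => if h : x ∈ X then
      f ((GX).connectedComponentMk ⟨x, Finset.mem_coe.mpr h⟩) = false else False)), by
    rw [ccut_mem_iff]
    refine ⟨?_, ?_, ?_⟩
    · ext x
      simp only [Finset.mem_union, Finset.mem_filter]
      constructor
      · rintro (⟨h, _⟩ | ⟨h, _⟩) <;> exact h
      · intro hx
        by_cases hf : f ((GX).connectedComponentMk ⟨x, Finset.mem_coe.mpr hx⟩) = true
        · left; exact ⟨hx, by simp [hx, hf]⟩
        · right; exact ⟨hx, by simp [hx]; simpa using hf⟩
    · ext x
      simp only [Finset.mem_inter, Finset.mem_filter, Finset.notMem_empty, iff_false]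
      rintro ⟨⟨hx, h1⟩, ⟨_, h2⟩⟩
      simp [hx] at h1 h2
      rw [h1] at h2
      exact absurd h2 (by simp)
    · intro x hx y hy hadj
      simp only [Finset.mem_filter] at hx hy
      obtain ⟨hxX, h1⟩ := hx
      obtain ⟨hyX, h2⟩ := hy
      simp [hxX] at h1
      simp [hyX] at h2
      have : (GX).connectedComponentMk ⟨x, Finset.mem_coe.mpr hxX⟩ =
          (GX).connectedComponentMk ⟨y, Finset.mem_coe.mpr hyX⟩ :=
        SimpleGraph.ConnectedComponent.connectedComponentMk_eq_of_adj hadj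
      rw [this, h2] at h1
      exact absurd h1 (by simp)⟩
  left_inv p := by
    obtain ⟨⟨p1, p2⟩, hp⟩ := p
    obtain ⟨hu, hd, hadj⟩ := (ccut_mem_iff G X _).mp hp
    ext x
    · simp only [Finset.mem_filter]
      constructor
      · rintro ⟨hx, h⟩
        simp [hx] at h
        simpa using h
      · intro hx
        have hxX : x ∈ X := by rw [← hu]; exact Finset.mem_union_left _ hx
        exact ⟨hxX, by simp [hxX, hx]⟩
    · simp only [Finset.mem_filter]
      constructor
      · rintro ⟨hx, h⟩
        simp [hx] at h
        rw [← hu] at hx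
        rcases Finset.mem_union.mp hx with h' | h'
        · simp [h'] at h
        · exact h'
      · intro hx
        have hxX : x ∈ X := by rw [← hu]; exact Finset.mem_union_right _ hx
        have hx1 : x ∉ p1 := by
          intro h
          have : x ∈ p1 ∩ p2 := Finset.mem_inter.mpr ⟨h, hx⟩
          simp [hd] at this
        exact ⟨hxX, by simp [hxX, hx1]⟩
  right_inv f := by
    funext c
    induction c using SimpleGraph.ConnectedComponent.ind with
    | _ v =>
      obtain ⟨x, hx⟩ := v
      have hxX : x ∈ X := hx
      simp [SimpleGraph.ConnectedComponent.lift_mk, hxX]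

end Aux

/-- The number of consistent cuts of `X` equals `2` raised to the number of connected
components of the induced subgraph `G[X]`. -/
theorem card_ccut_eq_two_pow {V : Type*} [Fintype V] [DecidableEq V]
    (G : SimpleGraph V) [DecidableRel G.Adj] (X : Finset V) :
    (ccut G X).card = 2 ^ Nat.card ((G.induce (X : Set V)).ConnectedComponent) := by
  classical
  have h1 : (ccut G X).card = Fintype.card {p // p ∈ ccut G X} :=
    (Fintype.card_coe _).symm
  rw [h1, Fintype.card_congr (ccutEquiv G X)]
  simp [Nat.card_eq_fintype_card]
end

section
/- Let G be a graph, A ⊆ V(G), and d a positive integer. The number of equivalence classes of the d-neighbor equivalence relation over A is at most (d+1)^{mw(A)}, where mw(A) is the number of distinct neighborhoods N(v) ∩ (V(G)\A) over v ∈ A. -/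
/-- `X` and `Y` are `d`-neighbor equivalent over `A` in `G`. -/
def nequiv {V : Type*} [Fintype V] [DecidableEq V] (G : SimpleGraph V) [DecidableRel G.Adj]
    (d : ℕ) (A X Y : Finset V) : Prop :=
  ∀ u ∉ A, min d (G.neighborFinset u ∩ X).card = min d (G.neighborFinset u ∩ Y).card

/-- The `d`-neighbor equivalence relation on the power set of `A`. -/
def necSetoid {V : Type*} [Fintype V] [DecidableEq V] (G : SimpleGraph V)
    [DecidableRel G.Adj] (d : ℕ) (A : Finset V) : Setoid {X : Finset V // X ⊆ A} where
  r X Y := nequiv G d A X.1 Y.1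
  iseqv := ⟨fun _ _ _ => rfl, fun h u hu => (h u hu).symm,
    fun h1 h2 u hu => (h1 u hu).trans (h2 u hu)⟩

/-!
Group the vertices of `A` by their neighborhood outside `A`; there are `mw(A)` groups. A vertex
`u ∉ A` is adjacent to all or none of each group, so `|N(u) ∩ X|` is a sum of group counts of `X`,
and its truncation at `d` only depends on those counts truncated at `d`. Hence the class of `X` is
determined by a function from the groups to `{0, …, d}`.
-/

open Finset

lemma min_sum_eq_min_sum_min {ι : Type*} (d : ℕ) (s : Finset ι) (f : ι → ℕ) :
    min d (∑ i ∈ s, f i) = min d (∑ i ∈ s, min d (f i)) := by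
  classical
  induction s using Finset.induction with
  | empty => rfl
  | insert i s hi ih =>
    rw [sum_insert hi, sum_insert hi]
    calc min d (f i + ∑ j ∈ s, f j) = min d (f i + min d (∑ j ∈ s, f j)) := by omega
      _ = min d (f i + min d (∑ j ∈ s, min d (f j))) := by rw [ih]
      _ = min d (min d (f i) + ∑ j ∈ s, min d (f j)) := by omega

section

variable {V : Type*} [Fintype V] [DecidableEq V] (G : SimpleGraph V) [DecidableRel G.Adj]
  (A : Finset V)

lemma card_neighborFinset_inter_eq_sum {u : V} (hu : u ∉ A) {Z : Finset V} (hZ : Z ⊆ A) :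
    #(G.neighborFinset u ∩ Z) =
      ∑ s ∈ (A.image fun v => G.neighborFinset v \ A).filter (u ∈ ·),
        #{v ∈ Z | G.neighborFinset v \ A = s} := by
  have hnbr : G.neighborFinset u ∩ Z = {v ∈ Z | u ∈ G.neighborFinset v \ A} := by
    ext v
    simp [G.adj_comm u v, hu, and_comm]
  rw [hnbr, card_eq_sum_card_fiberwise (f := fun v => G.neighborFinset v \ A)]
  · refine sum_congr rfl fun s hs => ?_
    rw [filter_filter]
    refine congrArg card (filter_congr fun v _ => ?_)
    exact ⟨And.right, fun h => ⟨h ▸ (mem_filter.mp hs).2, h⟩⟩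
  · intro v hv
    simp only [coe_filter, Set.mem_ofPred_eq] at hv
    simpa [hv.2] using mem_image_of_mem (fun v => G.neighborFinset v \ A) (hZ hv.1)

def truncatedClassCount (d : ℕ) (X : Finset V) :
    (A.image fun v => G.neighborFinset v \ A) → Fin (d + 1) :=
  fun s => ⟨min d #{v ∈ X | G.neighborFinset v \ A = s}, Nat.lt_succ_of_le (min_le_left _ _)⟩

lemma nequiv_of_truncatedClassCount_eq {d : ℕ} {X Y : Finset V} (hX : X ⊆ A) (hY : Y ⊆ A)
    (h : truncatedClassCount G A d X = truncatedClassCount G A d Y) : nequiv G d A X Y := by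
  intro u hu
  rw [card_neighborFinset_inter_eq_sum G A hu hX, card_neighborFinset_inter_eq_sum G A hu hY,
    min_sum_eq_min_sum_min, min_sum_eq_min_sum_min d _ (fun s => #{v ∈ Y | _ = s})]
  refine congrArg (min d) (sum_congr rfl fun s hs => ?_)
  exact congrArg Fin.val (congrFun h ⟨s, (mem_filter.mp hs).1⟩)

end

theorem nec_le_pow_mw_general {V : Type*} [Fintype V] [DecidableEq V]
    (G : SimpleGraph V) [DecidableRel G.Adj] (d : ℕ) (A : Finset V) :
    Nat.card (Quotient (necSetoid G d A)) ≤
      (d + 1) ^ (A.image (fun v => G.neighborFinset v \ A)).card := by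
  have hinj : Function.Injective
      fun q : Quotient (necSetoid G d A) => truncatedClassCount G A d q.out.1 := by
    intro q q' h
    rw [← q.out_eq, ← q'.out_eq]
    exact Quotient.sound (nequiv_of_truncatedClassCount_eq G A q.out.2 q'.out.2 h)
  calc Nat.card (Quotient (necSetoid G d A))
      ≤ Nat.card ((A.image fun v => G.neighborFinset v \ A) → Fin (d + 1)) :=
        Nat.card_le_card_of_injective _ hinj
    _ = (d + 1) ^ (A.image (fun v => G.neighborFinset v \ A)).card := by
        rw [Nat.card_fun, Nat.card_eq_finsetCard, Nat.card_eq_fintype_card, Fintype.card_fin]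

/-- nec_d(A) ≤ (d+1)^{mw(A)}: the number of `d`-neighbor equivalence classes over `A` is
at most `(d+1)` to the number of distinct neighborhoods `N(v) ∩ Ā`, `v ∈ A`. -/
theorem nec_le_pow_mw {V : Type*} [Fintype V] [DecidableEq V]
    (G : SimpleGraph V) [DecidableRel G.Adj] (d : ℕ) (hd : 0 < d) (A : Finset V) :
    Nat.card (Quotient (necSetoid G d A)) ≤
      (d + 1) ^ (A.image (fun v => G.neighborFinset v \ A)).card :=
  nec_le_pow_mw_general G d A
end

section
/- Let G be a graph, A ⊆ V(G), and t a natural number. The number of equivalence classes of the n-neighbor equivalence relation (n = |V(G)|) restricted to subsets of A of size at most t is at most (t+1)^{r}, where r is the rank over ℚ of the bipartite adjacency matrix between A and V(G)\A. -/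
/-- The `n`-neighbor equivalence relation (`n = |V(G)|`) on subsets of `A` of size ≤ t. -/
def necSetoidLe {V : Type*} [Fintype V] [DecidableEq V] (G : SimpleGraph V)
    [DecidableRel G.Adj] (A : Finset V) (t : ℕ) :
    Setoid {X : Finset V // X ⊆ A ∧ X.card ≤ t} where
  r X Y := nequiv G (Fintype.card V) A X.1 Y.1
  iseqv := ⟨fun _ _ _ => rfl, fun h u hu => (h u hu).symm,
    fun h1 h2 u hu => (h1 u hu).trans (h2 u hu)⟩

/-- The bipartite adjacency matrix between `A` and its complement, over a ring `F`. -/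
def bipAdj {V : Type*} [Fintype V] [DecidableEq V] (G : SimpleGraph V) [DecidableRel G.Adj]
    (A : Finset V) (F : Type*) [Zero F] [One F] :
    Matrix {x // x ∈ A} {y // y ∈ Aᶜ} F :=
  Matrix.of fun a b => if G.Adj a.1 b.1 then 1 else 0

/-!
The class of `X ⊆ A` is determined by the vector of neighbor counts `1_X ᵥ* M_{A,Ā}` over `ℚ`.
Fix `r = rank M` columns spanning the column space: since every column is a linear combination
of them, the counts at these `r` vertices already determine the whole vector, and for `|X| ≤ t`
each count lies in `{0, …, t}`.
-/

open Finset Module Matrix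

theorem exists_finset_card_eq_finrank_span_image_eq {K V ι : Type*} [DivisionRing K]
    [AddCommGroup V] [Module K V] [Finite ι] (v : ι → V) :
    ∃ s : Finset ι, s.card = finrank K (Submodule.span K (Set.range v)) ∧
      Submodule.span K (v '' s) = Submodule.span K (Set.range v) := by
  obtain ⟨κ, a, ha, hspan, hli⟩ := exists_linearIndependent' K v
  have : Finite κ := Finite.of_injective a ha
  have := Fintype.ofFinite κ
  refine ⟨univ.map ⟨a, ha⟩, ?_, ?_⟩
  · rw [← hspan, finrank_span_eq_card hli, card_map, card_univ]
  · rw [← hspan, Set.range_comp]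
    simp

theorem Matrix.exists_finset_card_eq_rank_vecMul_eq {K m n : Type*} [Field K] [Fintype m]
    [Fintype n] (M : Matrix m n K) :
    ∃ s : Finset n, s.card = M.rank ∧
      ∀ x y : m → K, (∀ j ∈ s, (x ᵥ* M) j = (y ᵥ* M) j) → x ᵥ* M = y ᵥ* M := by
  obtain ⟨s, hcard, hspan⟩ := exists_finset_card_eq_finrank_span_image_eq (K := K) M.col
  refine ⟨s, hcard.trans M.rank_eq_finrank_span_cols.symm, fun x y hxy => ?_⟩
  have hvecMul : ∀ z j, (z ᵥ* M) j = z ⬝ᵥ M.col j := fun _ _ => rfl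
  rw [← sub_eq_zero, ← sub_vecMul]
  have hker :
      Submodule.span K (Set.range M.col) ≤ LinearMap.ker (dotProductBilin K K (x - y)) := by
    rw [← hspan, Submodule.span_le]
    rintro _ ⟨j, hj, rfl⟩
    simpa [← hvecMul, sub_eq_zero] using hxy j hj
  funext j
  simpa [hvecMul] using hker (Submodule.subset_span ⟨j, rfl⟩)

def indicatorVec {V : Type*} [DecidableEq V] (A X : Finset V) (R : Type*) [Zero R] [One R] :
    {x // x ∈ A} → R := fun a => if a.1 ∈ X then 1 else 0

theorem indicatorVec_vecMul_bipAdj {V R : Type*} [Fintype V] [DecidableEq V]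
    [NonAssocSemiring R] (G : SimpleGraph V) [DecidableRel G.Adj] {A X : Finset V} (hX : X ⊆ A)
    (u : {y // y ∈ Aᶜ}) :
    (indicatorVec A X R ᵥ* bipAdj G A R) u = (G.neighborFinset u.1 ∩ X).card := by
  have hfilter : A.filter (fun a => G.Adj a u ∧ a ∈ X) = G.neighborFinset u.1 ∩ X := by
    ext a
    simp only [mem_filter, mem_inter, SimpleGraph.mem_neighborFinset, SimpleGraph.adj_comm]
    exact ⟨fun h => h.2, fun h => ⟨hX h.2, h⟩⟩
  simp only [vecMul, dotProduct, indicatorVec, bipAdj, of_apply, ← ite_and, mul_ite, mul_one,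
    mul_zero]
  rw [sum_coe_sort A (fun a => if G.Adj a u ∧ a ∈ X then (1 : R) else 0), sum_boole, hfilter]

theorem nequiv_card_iff {V : Type*} [Fintype V] [DecidableEq V] (G : SimpleGraph V)
    [DecidableRel G.Adj] {A X Y : Finset V} :
    nequiv G (Fintype.card V) A X Y ↔
      ∀ u ∉ A, (G.neighborFinset u ∩ X).card = (G.neighborFinset u ∩ Y).card := by
  simp only [nequiv, min_eq_right (card_le_univ _)]

theorem nequiv_card_iff_vecMul_eq {V R : Type*} [Fintype V] [DecidableEq V]
    [NonAssocSemiring R] [CharZero R] (G : SimpleGraph V) [DecidableRel G.Adj] {A X Y : Finset V}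
    (hX : X ⊆ A) (hY : Y ⊆ A) :
    nequiv G (Fintype.card V) A X Y ↔
      indicatorVec A X R ᵥ* bipAdj G A R = indicatorVec A Y R ᵥ* bipAdj G A R := by
  simp only [nequiv_card_iff, funext_iff, indicatorVec_vecMul_bipAdj G hX,
    indicatorVec_vecMul_bipAdj G hY, Nat.cast_inj, Subtype.forall, mem_compl]

/-- The number of `n`-neighbor equivalence classes among subsets of `A` of size at most `t`
is at most `(t+1)^r`, where `r` is the rank over `ℚ` of `M_{A,Ā}`. -/
theorem necLe_le_pow_rankQ {V : Type*} [Fintype V] [DecidableEq V]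
    (G : SimpleGraph V) [DecidableRel G.Adj] (A : Finset V) (t : ℕ) :
    Nat.card (Quotient (necSetoidLe G A t)) ≤ (t + 1) ^ (bipAdj G A ℚ).rank := by
  obtain ⟨s, hcard, hdet⟩ := (bipAdj G A ℚ).exists_finset_card_eq_rank_vecMul_eq
  let count (X : {X : Finset V // X ⊆ A ∧ X.card ≤ t}) (j : s) : Fin (t + 1) :=
    ⟨(G.neighborFinset j.1.1 ∩ X.1).card,
      Nat.lt_succ_of_le ((card_le_card inter_subset_right).trans X.2.2)⟩
  have nequiv_of_count_eq (X Y : {X : Finset V // X ⊆ A ∧ X.card ≤ t})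
      (hXY : count X = count Y) : nequiv G (Fintype.card V) A X Y := by
    refine (nequiv_card_iff_vecMul_eq (R := ℚ) G X.2.1 Y.2.1).2 (hdet _ _ fun j hj => ?_)
    have := congrArg Fin.val (congrFun hXY ⟨j, hj⟩)
    simp only [indicatorVec_vecMul_bipAdj G X.2.1, indicatorVec_vecMul_bipAdj G Y.2.1]
    exact_mod_cast this
  have count_eq_of_nequiv (X Y : {X : Finset V // X ⊆ A ∧ X.card ≤ t})
      (hXY : nequiv G (Fintype.card V) A X Y) : count X = count Y :=
    funext fun j => Fin.ext ((nequiv_card_iff G).1 hXY j.1.1 (mem_compl.1 j.1.2))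
  calc Nat.card (Quotient (necSetoidLe G A t))
      ≤ Nat.card (s → Fin (t + 1)) :=
        Nat.card_le_card_of_injective (Quotient.lift count count_eq_of_nequiv) <| by
          rintro ⟨X⟩ ⟨Y⟩ hXY
          exact Quotient.sound (nequiv_of_count_eq X Y hXY)
    _ = (t + 1) ^ (bipAdj G A ℚ).rank := by simp [hcard]
end

section
/- Let G be a graph, A ⊆ V(G), and t a natural number. The number of equivalence classes of the n-neighbor equivalence relation (n = |V(G)|) restricted to subsets of A of size at most t is at most 2^{t·rw(A)}, where rw(A) is the rank over GF(2) of the bipartite adjacency matrix between A and V(G)\A. -/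
/-!
Since `|N(u) ∩ X| ≤ n`, the truncation at `n` is vacuous and the class of `X` is determined by
the integer vector of neighbour counts `∑_{a ∈ X} row a`. Lifted from `GF(2)` to `{0, 1}`, every
row lies in the lifted row space, a set of `2^rw(A)` vectors containing `0`. Padding with zero
rows, a set of size at most `t` yields a sum of exactly `t` such vectors, and there are at most
`2^(t·rw(A))` of those.
-/

open Finset

def finSums {M : Type*} [AddCommMonoid M] (S : Set M) (t : ℕ) : Set M :=
  Set.range fun c : Fin t → S => ∑ j, (c j : M)

theorem sum_mem_finSums {ι M : Type*} [AddCommMonoid M] {S : Set M} (h0 : 0 ∈ S)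
    {f : ι → M} {s : Finset ι} (hf : ∀ i ∈ s, f i ∈ S) {t : ℕ} (hs : #s ≤ t) :
    ∑ i ∈ s, f i ∈ finSums S t := by
  classical
  induction s using Finset.induction_on generalizing t with
  | empty => exact ⟨fun _ => ⟨0, h0⟩, by simp⟩
  | insert a s ha ih =>
    rw [card_insert_of_notMem ha] at hs
    obtain ⟨t, rfl⟩ : ∃ t', t = t' + 1 := Nat.exists_eq_add_one.mpr (by omega)
    obtain ⟨c, hc⟩ := ih (fun i hi => hf i (mem_insert_of_mem hi)) (t := t) (by omega)
    refine ⟨Fin.cons ⟨f a, hf a (mem_insert_self a s)⟩ c, ?_⟩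
    simp [sum_insert ha, ← hc, Fin.sum_univ_succ]

theorem natCard_finSums_le {M : Type*} [AddCommMonoid M] (S : Set M) [Finite S] (t : ℕ) :
    Nat.card (finSums S t) ≤ Nat.card S ^ t := by
  refine (Finite.card_range_le fun c : Fin t → S => ∑ j, (c j : M)).trans_eq ?_
  rw [Nat.card_fun, Nat.card_fin]

instance {M : Type*} [AddCommMonoid M] (S : Set M) [Finite S] (t : ℕ) : Finite (finSums S t) :=
  Set.finite_range _ |>.to_subtype

namespace SimpleGraph

variable {V : Type*} [Fintype V] [DecidableEq V] (G : SimpleGraph V) [DecidableRel G.Adj]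
  (A : Finset V)

def neighborCount (X : Finset V) : {y // y ∈ Aᶜ} → ℕ :=
  fun u => #(G.neighborFinset u ∩ X)

def adjRow (a : V) : {y // y ∈ Aᶜ} → ℕ :=
  fun u => if G.Adj a u then 1 else 0

theorem neighborCount_eq_sum_adjRow (X : Finset V) :
    G.neighborCount A X = ∑ a ∈ X, G.adjRow A a := by
  ext u
  rw [neighborCount, Finset.sum_apply, inter_comm, ← filter_mem_eq_inter, card_filter]
  simp [adjRow, G.adj_comm]

theorem nequiv_card_iff_neighborCount_eq (X Y : Finset V) :
    nequiv G (Fintype.card V) A X Y ↔ G.neighborCount A X = G.neighborCount A Y := by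
  simp only [nequiv, min_eq_right (card_le_univ _), funext_iff, Subtype.forall, mem_compl,
    neighborCount]

/-- The row space of `bipAdj G A (ZMod 2)`, with entries lifted to `ℕ` so that integer sums of
rows, i.e. neighbour counts, live in the same type. -/
def rowSpaceLift : Set ({y // y ∈ Aᶜ} → ℕ) :=
  Set.range fun w : Submodule.span (ZMod 2) (Set.range (bipAdj G A (ZMod 2))) =>
    fun u => (w.1 u).val

instance : Finite (G.rowSpaceLift A) :=
  Set.finite_range _ |>.to_subtype

theorem zero_mem_rowSpaceLift : 0 ∈ G.rowSpaceLift A :=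
  ⟨0, by ext; simp⟩

theorem adjRow_mem_rowSpaceLift {a : V} (ha : a ∈ A) : G.adjRow A a ∈ G.rowSpaceLift A := by
  refine ⟨⟨bipAdj G A (ZMod 2) ⟨a, ha⟩, Submodule.subset_span ⟨_, rfl⟩⟩, funext fun u => ?_⟩
  simp only [bipAdj, Matrix.of_apply, adjRow]
  split_ifs <;> rfl

theorem natCard_rowSpaceLift_le :
    Nat.card (G.rowSpaceLift A) ≤ 2 ^ (bipAdj G A (ZMod 2)).rank := by
  refine (Finite.card_range_le _).trans_eq ?_
  rw [Module.natCard_eq_pow_finrank (K := ZMod 2), Nat.card_zmod,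
    Matrix.rank_eq_finrank_span_row]
  rfl

theorem neighborCount_mem_finSums {X : Finset V} (hXA : X ⊆ A) {t : ℕ} (hXt : #X ≤ t) :
    G.neighborCount A X ∈ finSums (G.rowSpaceLift A) t := by
  rw [neighborCount_eq_sum_adjRow]
  exact sum_mem_finSums (G.zero_mem_rowSpaceLift A)
    (fun a ha => G.adjRow_mem_rowSpaceLift A (hXA ha)) hXt

end SimpleGraph

open SimpleGraph in
/-- The number of `n`-neighbor equivalence classes among subsets of `A` of size at most `t`
is at most `2^{t · rw(A)}`, where `rw(A)` is the rank over `GF(2)` of `M_{A,Ā}`. -/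
theorem necLe_le_pow_rankGF2 {V : Type*} [Fintype V] [DecidableEq V]
    (G : SimpleGraph V) [DecidableRel G.Adj] (A : Finset V) (t : ℕ) :
    Nat.card (Quotient (necSetoidLe G A t)) ≤ 2 ^ (t * (bipAdj G A (ZMod 2)).rank) := by
  let count : Quotient (necSetoidLe G A t) → finSums (G.rowSpaceLift A) t :=
    Quotient.lift (fun X => ⟨_, G.neighborCount_mem_finSums A X.2.1 X.2.2⟩)
      fun _ _ h => Subtype.ext ((nequiv_card_iff_neighborCount_eq G A _ _).1 h)
  have hcount : Function.Injective count := by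
    rintro ⟨X⟩ ⟨Y⟩ h
    exact Quotient.sound ((nequiv_card_iff_neighborCount_eq G A _ _).2 (congrArg Subtype.val h))
  calc Nat.card (Quotient (necSetoidLe G A t))
      ≤ Nat.card (finSums (G.rowSpaceLift A) t) := Nat.card_le_card_of_injective count hcount
    _ ≤ Nat.card (G.rowSpaceLift A) ^ t := natCard_finSums_le _ t
    _ ≤ (2 ^ (bipAdj G A (ZMod 2)).rank) ^ t :=
        Nat.pow_le_pow_left (natCard_rowSpaceLift_le G A) t
    _ = 2 ^ (t * (bipAdj G A (ZMod 2)).rank) := by rw [← pow_mul, mul_comm]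
end

section
/- Let G be a graph, A ⊆ V(G), and (σ, ρ) a pair of finite or co-finite subsets of ℕ. Let d := max(1, d(σ), d(ρ)). For all X ⊆ A and Y, Y' ⊆ V(G)\A with Y ≡_{V(G)\A}^d Y', the set X ∪ Y (σ,ρ)-dominates A if and only if X ∪ Y' (σ,ρ)-dominates A. -/
open Classical in
/-- `d(μ)` for a finite or co-finite `μ ⊆ ℕ`: `0` if `μ = ℕ`, otherwise
`1 + min(max μ, max(ℕ \ μ))`, i.e. `1 + max μ` if `μ` is finite and
`1 + max (ℕ \ μ)` if `μ` is co-finite. -/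
noncomputable def dval (μ : Set ℕ) : ℕ :=
  if μ = Set.univ then 0 else if μ.Finite then 1 + sSup μ else 1 + sSup μᶜ

/-- `D` `(σ,ρ)`-dominates `A`: every `u ∈ A` has `|N(u) ∩ D| ∈ σ` if `u ∈ D`, and
`|N(u) ∩ D| ∈ ρ` otherwise. -/
def SRDominates {V : Type*} [Fintype V] [DecidableEq V] (G : SimpleGraph V)
    [DecidableRel G.Adj] (σ ρ : Set ℕ) (D A : Finset V) : Prop :=
  ∀ u ∈ A, if u ∈ D then (G.neighborFinset u ∩ D).card ∈ σ
           else (G.neighborFinset u ∩ D).card ∈ ρ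

lemma mem_iff_of_ge_dval (μ : Set ℕ) (hμ : μ.Finite ∨ μᶜ.Finite) {m n : ℕ}
    (hm : dval μ ≤ m) (hn : dval μ ≤ n) : m ∈ μ ↔ n ∈ μ := by
  by_cases huniv : μ = Set.univ
  · simp [huniv]
  by_cases hfin : μ.Finite
  · rw [dval, if_neg huniv, if_pos hfin] at hm hn
    have h1 : m ∉ μ := fun h => by
      have := le_csSup hfin.bddAbove h; omega
    have h2 : n ∉ μ := fun h => by
      have := le_csSup hfin.bddAbove h; omega
    simp [h1, h2]
  · rw [dval, if_neg huniv, if_neg hfin] at hm hn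
    have hcfin : μᶜ.Finite := hμ.resolve_left hfin
    have h1 : m ∈ μ := by
      by_contra h
      have := le_csSup hcfin.bddAbove (show m ∈ μᶜ from h); omega
    have h2 : n ∈ μ := by
      by_contra h
      have := le_csSup hcfin.bddAbove (show n ∈ μᶜ from h); omega
    simp [h1, h2]

/-- If `Y ≡_{Ā}^d Y'` with `d = max(1, d(σ), d(ρ))`, then `X ∪ Y` `(σ,ρ)`-dominates `A`
iff `X ∪ Y'` does. -/
theorem srDominates_iff_of_nequiv {V : Type*} [Fintype V] [DecidableEq V]
    (G : SimpleGraph V) [DecidableRel G.Adj] (σ ρ : Set ℕ)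
    (hσ : σ.Finite ∨ σᶜ.Finite) (hρ : ρ.Finite ∨ ρᶜ.Finite)
    (A X Y Y' : Finset V) (hX : X ⊆ A) (hY : Y ⊆ Aᶜ) (hY' : Y' ⊆ Aᶜ)
    (heq : nequiv G (max 1 (max (dval σ) (dval ρ))) Aᶜ Y Y') :
    SRDominates G σ ρ (X ∪ Y) A ↔ SRDominates G σ ρ (X ∪ Y') A := by
  set d := max 1 (max (dval σ) (dval ρ)) with hd
  suffices h : ∀ u ∈ A,
      ((if u ∈ X ∪ Y then (G.neighborFinset u ∩ (X ∪ Y)).card ∈ σ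
        else (G.neighborFinset u ∩ (X ∪ Y)).card ∈ ρ) ↔
       (if u ∈ X ∪ Y' then (G.neighborFinset u ∩ (X ∪ Y')).card ∈ σ
        else (G.neighborFinset u ∩ (X ∪ Y')).card ∈ ρ)) by
    constructor <;> intro H u hu
    · exact (h u hu).mp (H u hu)
    · exact (h u hu).mpr (H u hu)
  intro u hu
  have hu' : u ∉ Aᶜ := by simp [hu]
  have key := heq u hu'
  have hdisj : ∀ Z : Finset V, Z ⊆ Aᶜ →
      Disjoint (G.neighborFinset u ∩ X) (G.neighborFinset u ∩ Z) := by
    intro Z hZ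
    apply Finset.disjoint_left.mpr
    intro v hv hv'
    have h1 : v ∈ A := hX (Finset.mem_inter.mp hv).2
    have h2 : v ∈ Aᶜ := hZ (Finset.mem_inter.mp hv').2
    simp at h2; exact h2 h1
  have hcard : ∀ Z : Finset V, Z ⊆ Aᶜ →
      (G.neighborFinset u ∩ (X ∪ Z)).card =
        (G.neighborFinset u ∩ X).card + (G.neighborFinset u ∩ Z).card := by
    intro Z hZ
    rw [Finset.inter_union_distrib_left, Finset.card_union_of_disjoint (hdisj Z hZ)]
  have hmem : ∀ Z : Finset V, Z ⊆ Aᶜ → (u ∈ X ∪ Z ↔ u ∈ X) := by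
    intro Z hZ
    simp only [Finset.mem_union, or_iff_left_iff_imp]
    intro h; exact absurd (hZ h) hu'
  rw [hcard Y hY, hcard Y' hY']
  set cX := (G.neighborFinset u ∩ X).card
  set cY := (G.neighborFinset u ∩ Y).card
  set cY' := (G.neighborFinset u ∩ Y').card
  have hcase : cY = cY' ∨ (d ≤ cY ∧ d ≤ cY') := by omega
  have m1 := hmem Y hY
  have m2 := hmem Y' hY'
  rcases hcase with h | ⟨h1, h2⟩
  · rw [h]
    by_cases hx : u ∈ X
    · rw [if_pos (m1.mpr hx), if_pos (m2.mpr hx)]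
    · rw [if_neg (fun h => hx (m1.mp h)), if_neg (fun h => hx (m2.mp h))]
  · have hdσ : dval σ ≤ d := le_trans (le_max_left _ _) (le_max_right _ _)
    have hdρ : dval ρ ≤ d := le_trans (le_max_right _ _) (le_max_right _ _)
    have hσiff : cX + cY ∈ σ ↔ cX + cY' ∈ σ :=
      mem_iff_of_ge_dval σ hσ (by omega) (by omega)
    have hρiff : cX + cY ∈ ρ ↔ cX + cY' ∈ ρ :=
      mem_iff_of_ge_dval ρ hρ (by omega) (by omega)
    by_cases hx : u ∈ X
    · rw [if_pos (m1.mpr hx), if_pos (m2.mpr hx)]; exact hσiff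
    · rw [if_neg (fun h => hx (m1.mp h)), if_neg (fun h => hx (m2.mp h))]; exact hρiff
end

section
/- Let G be a graph, A ⊆ V(G), and R' ⊆ V(G)\A. Suppose X ⊆ A and Y ⊆ V(G)\A with Y ≡_{V(G)\A}^2 R', and suppose G[X ∪ Y] is a tree. Then for any two distinct vertices a, b ∈ X each having at least two neighbors in R', we have N(a) ∩ (V(G)\A) ≠ N(b) ∩ (V(G)\A). -/
namespace SimpleGraph

variable {V : Type*} {G : SimpleGraph V}

theorem IsAcyclic.eq_of_adj_of_adj (hG : G.IsAcyclic) {a b x y : V} (hab : a ≠ b)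
    (hax : G.Adj a x) (hxb : G.Adj x b) (hay : G.Adj a y) (hyb : G.Adj y b) : x = y := by
  have path {z : V} (haz : G.Adj a z) (hzb : G.Adj z b) :
      (Walk.cons haz (Walk.cons hzb Walk.nil)).IsPath := by
    simp [Walk.cons_isPath_iff, hab, haz.ne, hzb.ne]
  have := congrArg Subtype.val <|
    (hG.subsingleton_path a b).elim ⟨_, path hax hxb⟩ ⟨_, path hay hyb⟩
  simp only [Walk.cons.injEq] at this
  exact this.1

theorem IsAcyclic.card_inter_neighborFinset_inter_le_one [Fintype V] [DecidableEq V]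
    [DecidableRel G.Adj] {S : Finset V} (hG : (G.induce (S : Set V)).IsAcyclic) {a b : V}
    (ha : a ∈ S) (hb : b ∈ S) (hab : a ≠ b) :
    (G.neighborFinset a ∩ G.neighborFinset b ∩ S).card ≤ 1 := by
  refine Finset.card_le_one.mpr fun x hx y hy => ?_
  simp only [Finset.mem_inter, mem_neighborFinset] at hx hy
  have := hG.eq_of_adj_of_adj (a := ⟨a, ha⟩) (b := ⟨b, hb⟩) (x := ⟨x, hx.2⟩)
    (y := ⟨y, hy.2⟩) (by simpa using hab) hx.1.1 hx.1.2.symm hy.1.1 hy.1.2.symm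
  exact congrArg Subtype.val this

end SimpleGraph

theorem nequiv.le_card_inter_left {V : Type*} [Fintype V] [DecidableEq V] {G : SimpleGraph V}
    [DecidableRel G.Adj] {d : ℕ} {A X Y : Finset V} (h : nequiv G d A X Y) {u : V} (hu : u ∉ A)
    (hY : d ≤ (G.neighborFinset u ∩ Y).card) : d ≤ (G.neighborFinset u ∩ X).card := by
  have := h u hu
  omega

theorem neighborhoods_distinct_of_tree_general {V : Type*} [Fintype V] [DecidableEq V]
    (G : SimpleGraph V) [DecidableRel G.Adj] (A X Y R' : Finset V)
    (hX : X ⊆ A) (hY : Y ⊆ Aᶜ)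
    (heq : nequiv G 2 Aᶜ Y R')
    (htree : (G.induce ((X ∪ Y : Finset V) : Set V)).IsTree)
    (a b : V) (ha : a ∈ X) (hb : b ∈ X) (hab : a ≠ b)
    (ha2 : 2 ≤ (G.neighborFinset a ∩ R').card) :
    G.neighborFinset a ∩ Aᶜ ≠ G.neighborFinset b ∩ Aᶜ := by
  intro hN
  have hY₂ : 2 ≤ (G.neighborFinset a ∩ Y).card :=
    heq.le_card_inter_left (by simpa using hX ha) ha2
  have hsub :
      G.neighborFinset a ∩ Y ⊆ G.neighborFinset a ∩ G.neighborFinset b ∩ (X ∪ Y) := by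
    intro y hy
    obtain ⟨hay, hyY⟩ := Finset.mem_inter.mp hy
    have hby : y ∈ G.neighborFinset b ∩ Aᶜ := hN ▸ Finset.mem_inter.mpr ⟨hay, hY hyY⟩
    exact Finset.mem_inter.mpr
      ⟨Finset.mem_inter.mpr ⟨hay, (Finset.mem_inter.mp hby).1⟩, Finset.mem_union_right _ hyY⟩
  have hcommon := htree.isAcyclic.card_inter_neighborFinset_inter_le_one
    (Finset.mem_union_left Y ha) (Finset.mem_union_left Y hb) hab
  have := Finset.card_le_card hsub
  omega

/-- If `Y ≡_{Ā}^2 R'` and `G[X ∪ Y]` is a tree, then any two distinct vertices of `X`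
each having at least two neighbors in `R'` have different neighborhoods in `Ā`. -/
theorem neighborhoods_distinct_of_tree {V : Type*} [Fintype V] [DecidableEq V]
    (G : SimpleGraph V) [DecidableRel G.Adj] (A X Y R' : Finset V)
    (hX : X ⊆ A) (hY : Y ⊆ Aᶜ) (hR' : R' ⊆ Aᶜ)
    (heq : nequiv G 2 Aᶜ Y R')
    (htree : (G.induce ((X ∪ Y : Finset V) : Set V)).IsTree)
    (a b : V) (ha : a ∈ X) (hb : b ∈ X) (hab : a ≠ b)
    (ha2 : 2 ≤ (G.neighborFinset a ∩ R').card)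
    (hb2 : 2 ≤ (G.neighborFinset b ∩ R').card) :
    G.neighborFinset a ∩ Aᶜ ≠ G.neighborFinset b ∩ Aᶜ :=
  neighborhoods_distinct_of_tree_general G A X Y R' hX hY heq htree a b ha hb hab ha2
end

section
/- Let F be a forest whose vertex set is partitioned into sides P and Y (F is bipartite with parts P and Y), and suppose every vertex of P has degree at least 2 in F. Then there exists a bipartition {X1, X2} of P such that for each i ∈ {1,2} and each v ∈ Xi, there is a vertex y ∈ Y whose neighborhood in F intersects Xi exactly in {v}. Consequently, |P| is at most twice the maximum size of an induced matching of F. -/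
/-- `M` is an induced matching of the bipartite graph `F` with parts `P` and `Y`:
a set of edges `(p, y)` with `p ∈ P`, `y ∈ Y`, such that distinct pairs have distinct
endpoints and there is no edge of `F` between endpoints of distinct pairs. -/
def IsInducedMatchingBip {V : Type*} (F : SimpleGraph V) (P Y : Finset V)
    (M : Finset (V × V)) : Prop :=
  (∀ p ∈ M, p.1 ∈ P ∧ p.2 ∈ Y ∧ F.Adj p.1 p.2) ∧
  (∀ p ∈ M, ∀ q ∈ M, p ≠ q →
    p.1 ≠ q.1 ∧ p.2 ≠ q.2 ∧ ¬ F.Adj p.1 q.2 ∧ ¬ F.Adj q.1 p.2)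

open SimpleGraph Finset

section Aux

variable {V : Type*} {F : SimpleGraph V} {P Y : Finset V}

/-- Parity of a walk in a bipartite-like graph. -/
lemma aux_walk_parity (hbip : ∀ u v, F.Adj u v → ¬ (u ∈ P ↔ v ∈ P)) :
    ∀ {u v : V} (p : F.Walk u v), Even p.length ↔ (u ∈ P ↔ v ∈ P) := by
  intro u v p
  induction p with
  | nil => simp
  | cons h q ih =>
    have hab := hbip _ _ h
    rw [Walk.length_cons, Nat.even_add_one, ih]
    tauto

lemma aux_dist_parity (hbip : ∀ u v, F.Adj u v → ¬ (u ∈ P ↔ v ∈ P))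
    {r v : V} (h : F.Reachable r v) :
    Even (F.dist r v) ↔ (r ∈ P ↔ v ∈ P) := by
  obtain ⟨p, hp⟩ := h.exists_walk_length_eq_dist
  rw [← hp]; exact aux_walk_parity hbip p

lemma aux_adj_dist (hbip : ∀ u v, F.Adj u v → ¬ (u ∈ P ↔ v ∈ P))
    {r u v : V} (h : F.Adj u v) (hru : F.Reachable r u) :
    F.dist r v = F.dist r u + 1 ∨ F.dist r u = F.dist r v + 1 := by
  have hrv : F.Reachable r v := hru.trans h.reachable
  obtain ⟨p, hp⟩ := hru.exists_walk_length_eq_dist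
  obtain ⟨q, hq⟩ := hrv.exists_walk_length_eq_dist
  have h1 : F.dist r v ≤ F.dist r u + 1 := by
    have := F.dist_le (p.concat h)
    rwa [Walk.length_concat, hp] at this
  have h2 : F.dist r u ≤ F.dist r v + 1 := by
    have := F.dist_le (q.concat h.symm)
    rwa [Walk.length_concat, hq] at this
  have e1 := aux_dist_parity hbip hru
  have e2 := aux_dist_parity hbip hrv
  have e3 := hbip _ _ h
  have e4 : ¬ (Even (F.dist r u) ↔ Even (F.dist r v)) := by tauto
  rw [Nat.even_iff, Nat.even_iff] at e4
  omega

/-- In an acyclic graph, a vertex has at most one neighbor closer to a fixed root. -/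
lemma aux_unique_parent (hforest : F.IsAcyclic) {r y u u' : V}
    (hu : F.Adj u y) (hu' : F.Adj u' y)
    (hdu : F.dist r u + 1 = F.dist r y) (hdu' : F.dist r u' + 1 = F.dist r y)
    (hru : F.Reachable r u) (hru' : F.Reachable r u') : u = u' := by
  classical
  obtain ⟨p, hp, hpl⟩ := hru.exists_path_of_dist
  obtain ⟨p', hp'2, hpl'⟩ := hru'.exists_path_of_dist
  have hyns : ∀ {a : V} (q : F.Walk r a), q.length = F.dist r a →
      F.dist r a + 1 = F.dist r y → y ∉ q.support := by
    intro a q hql hda hmem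
    have h1 := F.dist_le (q.takeUntil y hmem)
    have h2 := Walk.length_takeUntil_le q hmem
    omega
  have hq : (p.concat hu).IsPath := by
    rw [← Walk.isPath_reverse_iff, Walk.reverse_concat, Walk.cons_isPath_iff,
      Walk.isPath_reverse_iff]
    refine ⟨hp, ?_⟩
    rw [Walk.support_reverse, List.mem_reverse]
    exact hyns p hpl hdu
  have hq' : (p'.concat hu').IsPath := by
    rw [← Walk.isPath_reverse_iff, Walk.reverse_concat, Walk.cons_isPath_iff,
      Walk.isPath_reverse_iff]
    refine ⟨hp'2, ?_⟩
    rw [Walk.support_reverse, List.mem_reverse]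
    exact hyns p' hpl' hdu'
  have hpath := isAcyclic_iff_path_unique.mp hforest ⟨p.concat hu, hq⟩ ⟨p'.concat hu', hq'⟩
  have heq : p.concat hu = p'.concat hu' := congrArg Subtype.val hpath
  have g1 : (p.concat hu).reverse.getVert 1 = u := by
    rw [Walk.reverse_concat]
    simp [Walk.getVert_cons_succ, Walk.getVert_zero]
  have g2 : (p'.concat hu').reverse.getVert 1 = u' := by
    rw [Walk.reverse_concat]
    simp [Walk.getVert_cons_succ, Walk.getVert_zero]
  rw [← g1, ← g2, heq]

end Aux

open Classical in
/-- A canonical root (a vertex of `Y` if possible) for each connected component. -/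
noncomputable def bipRootC {V : Type*} (F : SimpleGraph V) (Y : Finset V)
    (c : F.ConnectedComponent) : V :=
  if h : ∃ y, y ∈ Y ∧ F.connectedComponentMk y = c then h.choose else Quot.out c

lemma bipRootC_spec {V : Type*} (F : SimpleGraph V) (Y : Finset V)
    {c : F.ConnectedComponent} (h : ∃ y, y ∈ Y ∧ F.connectedComponentMk y = c) :
    bipRootC F Y c ∈ Y ∧ F.connectedComponentMk (bipRootC F Y c) = c := by
  classical
  rw [bipRootC, dif_pos h]
  exact h.choose_spec

/-- Build an induced matching from a set of vertices each having a private neighbor. -/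
lemma matching_of_private {V : Type*} [Fintype V] [DecidableEq V] {F : SimpleGraph V}
    [DecidableRel F.Adj] {P Y X : Finset V}
    (hXP : X ⊆ P) (hpriv : ∀ v ∈ X, ∃ y ∈ Y, F.neighborFinset y ∩ X = {v}) :
    ∃ M : Finset (V × V), IsInducedMatchingBip F P Y M ∧ M.card = X.card := by
  classical
  have hch : ∀ v : V, ∃ y, v ∈ X → y ∈ Y ∧ F.neighborFinset y ∩ X = {v} := by
    intro v
    by_cases h : v ∈ X
    · obtain ⟨y, hy1, hy2⟩ := hpriv v h
      exact ⟨y, fun _ => ⟨hy1, hy2⟩⟩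
    · exact ⟨v, fun h' => absurd h' h⟩
  choose g hg using hch
  have hadj : ∀ v ∈ X, F.Adj v (g v) := by
    intro v hv
    have hv1 : v ∈ F.neighborFinset (g v) ∩ X := by
      rw [(hg v hv).2]; exact mem_singleton_self v
    exact ((mem_neighborFinset _ _ _).mp (mem_inter.mp hv1).1).symm
  have hne : ∀ v ∈ X, ∀ u ∈ X, F.Adj u (g v) → u = v := by
    intro v hv u hu h
    have : u ∈ F.neighborFinset (g v) ∩ X :=
      mem_inter.mpr ⟨(mem_neighborFinset _ _ _).mpr h.symm, hu⟩
    rw [(hg v hv).2] at this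
    exact mem_singleton.mp this
  refine ⟨X.image (fun v => (v, g v)), ⟨?_, ?_⟩, ?_⟩
  · rintro p hp
    obtain ⟨v, hv, rfl⟩ := mem_image.mp hp
    exact ⟨hXP hv, (hg v hv).1, hadj v hv⟩
  · rintro p hp q hq hpq
    obtain ⟨a, ha, rfl⟩ := mem_image.mp hp
    obtain ⟨b, hb, rfl⟩ := mem_image.mp hq
    have hab : a ≠ b := fun h => hpq (by rw [h])
    refine ⟨hab, ?_, ?_, ?_⟩
    · intro h
      have h' : g a = g b := h
      exact hab (hne b hb a ha (h' ▸ hadj a ha))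
    · intro h
      exact hab (hne b hb a ha h)
    · intro h
      exact hab.symm (hne a ha b hb h)
  · exact card_image_of_injOn (fun a _ b _ h => (Prod.ext_iff.mp h).1)

/-- A forest `F`, bipartite with parts `P` and `Y`, in which every vertex of `P` has
degree at least 2, admits a bipartition `{X1, X2}` of `P` such that every `v ∈ Xi` has a
private neighbor `y ∈ Y` with `N_F(y) ∩ Xi = {v}`; consequently `|P|` is at most twice
the size of some induced matching of `F`. -/
theorem good_bipartition_of_forest {V : Type*} [Fintype V] [DecidableEq V]
    (F : SimpleGraph V) [DecidableRel F.Adj] (P Y : Finset V)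
    (hdisjPY : Disjoint P Y) (hcover : P ∪ Y = Finset.univ)
    (hbip : ∀ u v, F.Adj u v → (u ∈ P ∧ v ∈ Y) ∨ (u ∈ Y ∧ v ∈ P))
    (hforest : F.IsAcyclic)
    (hdeg : ∀ v ∈ P, 2 ≤ F.degree v) :
    (∃ X1 X2 : Finset V, Disjoint X1 X2 ∧ X1 ∪ X2 = P ∧
      (∀ v ∈ X1, ∃ y ∈ Y, F.neighborFinset y ∩ X1 = {v}) ∧
      (∀ v ∈ X2, ∃ y ∈ Y, F.neighborFinset y ∩ X2 = {v})) ∧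
    (∃ M : Finset (V × V), IsInducedMatchingBip F P Y M ∧ P.card ≤ 2 * M.card) := by
  classical
  have hPnY : ∀ v ∈ P, v ∉ Y := fun v hv => Finset.disjoint_left.mp hdisjPY hv
  have hYnP : ∀ v ∈ Y, v ∉ P := fun v hv => Finset.disjoint_right.mp hdisjPY hv
  have hbip' : ∀ u v, F.Adj u v → ¬ (u ∈ P ↔ v ∈ P) := by
    intro u v h
    rcases hbip u v h with ⟨h1, h2⟩ | ⟨h1, h2⟩
    · have := hYnP v h2; tauto
    · have := hYnP u h1; tauto
  -- the distance function
  set d : V → ℕ := fun v => F.dist (bipRootC F Y (F.connectedComponentMk v)) v with hd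
  -- each vertex of P has a neighbor, which lies in Y
  have hop : ∀ v ∈ P, ∃ y, y ∈ Y ∧ F.Adj v y := by
    intro v hv
    have h2 : 0 < (F.neighborFinset v).card := by
      have := hdeg v hv
      rw [← F.card_neighborFinset_eq_degree v] at this
      omega
    obtain ⟨y, hy⟩ := Finset.card_pos.mp h2
    rw [mem_neighborFinset] at hy
    rcases hbip v y hy with ⟨_, h2⟩ | ⟨h1, _⟩
    · exact ⟨y, h2, hy⟩
    · exact absurd h1 (hPnY v hv)
  have hex : ∀ v ∈ P, ∃ y, y ∈ Y ∧
      F.connectedComponentMk y = F.connectedComponentMk v := by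
    intro v hv
    obtain ⟨y, hy1, hy2⟩ := hop v hv
    exact ⟨y, hy1, ConnectedComponent.sound hy2.symm.reachable⟩
  have hroot : ∀ v ∈ P, bipRootC F Y (F.connectedComponentMk v) ∈ Y ∧
      F.Reachable (bipRootC F Y (F.connectedComponentMk v)) v := by
    intro v hv
    obtain ⟨h1, h2⟩ := bipRootC_spec F Y (hex v hv)
    exact ⟨h1, ConnectedComponent.exact h2⟩
  have hodd : ∀ v ∈ P, d v % 2 = 1 := by
    intro v hv
    obtain ⟨h1, h2⟩ := hroot v hv
    have := aux_dist_parity hbip' h2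
    have hrP := hYnP _ h1
    rw [Nat.even_iff] at this
    have : ¬ (d v % 2 = 0) := by
      intro h
      exact hrP ((this.mp h).mpr hv)
    omega
  -- main claim: for either residue class c ∈ {1,3} mod 4, private neighbors exist
  have main : ∀ c : ℕ, ∀ v ∈ P.filter (fun v => d v % 4 = c),
      ∃ y ∈ Y, F.neighborFinset y ∩ P.filter (fun v => d v % 4 = c) = {v} := by
    intro c v hv
    rw [mem_filter] at hv
    obtain ⟨hvP, hv4⟩ := hv
    set r := bipRootC F Y (F.connectedComponentMk v) with hr
    obtain ⟨hrY, hrv⟩ := hroot v hvP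
    -- find an "up" neighbor y of v
    have hdv : d v = F.dist r v := rfl
    have hup : ∃ y, F.Adj v y ∧ F.dist r y = F.dist r v + 1 := by
      have h2 : 1 < (F.neighborFinset v).card := by
        have := hdeg v hvP
        rw [← F.card_neighborFinset_eq_degree v] at this
        omega
      obtain ⟨a, ha, b, hb, hab⟩ := Finset.one_lt_card.mp h2
      rw [mem_neighborFinset] at ha hb
      rcases aux_adj_dist hbip' ha hrv with h | h
      · exact ⟨a, ha, h⟩
      · rcases aux_adj_dist hbip' hb hrv with h' | h'
        · exact ⟨b, hb, h'⟩
        · exfalso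
          apply hab
          exact aux_unique_parent hforest ha.symm hb.symm (by omega) (by omega)
            (hrv.trans ha.reachable) (hrv.trans hb.reachable)
    obtain ⟨y, hvy, hdy⟩ := hup
    have hyY : y ∈ Y := by
      rcases hbip v y hvy with ⟨_, h2⟩ | ⟨h1, _⟩
      · exact h2
      · exact absurd h1 (hPnY v hvP)
    refine ⟨y, hyY, ?_⟩
    ext u
    rw [mem_inter, mem_neighborFinset, mem_filter, mem_singleton]
    constructor
    · rintro ⟨hadj, huP, hu4⟩
      -- u is in the same component as v
      have hreach : F.Reachable r u :=
        (hrv.trans hvy.reachable).trans hadj.reachable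
      have hmk : F.connectedComponentMk u = F.connectedComponentMk v :=
        ConnectedComponent.sound ((hrv.symm.trans hreach).symm)
      have hdu : d u = F.dist r u := by
        show F.dist (bipRootC F Y (F.connectedComponentMk u)) u = F.dist r u
        rw [hmk, ← hr]
      rcases aux_adj_dist hbip' hadj.symm hreach with h | h
      · -- dist r y = dist r u + 1 : u is the parent of y, so u = v
        exact aux_unique_parent hforest hadj.symm hvy (by omega) (by omega) hreach hrv
      · -- dist r u = dist r y + 1 = dist r v + 2 : contradiction mod 4
        exfalso
        rw [hdu] at hu4
        rw [← hdv] at hdy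
        omega
    · rintro rfl
      exact ⟨hvy.symm, hvP, hv4⟩
  set X1 : Finset V := P.filter (fun v => d v % 4 = 1) with hX1
  set X2 : Finset V := P.filter (fun v => d v % 4 = 3) with hX2
  have hdisj : Disjoint X1 X2 := by
    rw [Finset.disjoint_left]
    intro a h1 h2
    rw [hX1, mem_filter] at h1
    rw [hX2, mem_filter] at h2
    omega
  have hunion : X1 ∪ X2 = P := by
    ext u
    rw [mem_union, hX1, hX2, mem_filter, mem_filter]
    constructor
    · rintro (⟨h, _⟩ | ⟨h, _⟩) <;> exact h
    · intro h
      have := hodd u h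
      have : d u % 4 = 1 ∨ d u % 4 = 3 := by omega
      tauto
  have hb1 := main 1
  have hb2 := main 3
  rw [← hX1] at hb1
  rw [← hX2] at hb2
  refine ⟨⟨X1, X2, hdisj, hunion, hb1, hb2⟩, ?_⟩
  have hcard : X1.card + X2.card = P.card := by
    rw [← card_union_of_disjoint hdisj, hunion]
  have hX1P : X1 ⊆ P := by rw [hX1]; exact filter_subset _ _
  have hX2P : X2 ⊆ P := by rw [hX2]; exact filter_subset _ _
  rcases le_total X1.card X2.card with hle | hle
  · obtain ⟨M, hM1, hM2⟩ := matching_of_private hX2P hb2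
    exact ⟨M, hM1, by omega⟩
  · obtain ⟨M, hM1, hM2⟩ := matching_of_private hX1P hb1
    exact ⟨M, hM1, by omega⟩
end

section
/- Let G be a graph, A ⊆ V(G), and R' ⊆ V(G)\A. If X ⊆ A is R'-important (i.e., there exists Y ⊆ V(G)\A with Y ≡_{V(G)\A}^2 R' such that G[X ∪ Y] is a tree), then the set X^{2+} := { v ∈ X : |N(v) ∩ R'| ≥ 2 } has size at most 2·mim(A), where mim(A) is the maximum size of an induced matching of the bipartite graph G[A, V(G)\A]. -/
open SimpleGraph

lemma tree_walk_length_eq_dist {V : Type*} {T : SimpleGraph V} (hT : T.IsTree) {r v : V}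
    (p : T.Walk r v) (hp : p.IsPath) : p.length = T.dist r v := by
  obtain ⟨q, hq, hl⟩ := hT.isConnected.exists_path_of_dist r v
  rwa [(hT.existsUnique_path r v).unique hp hq]

lemma tree_adj_dist {V : Type*} [DecidableEq V] {T : SimpleGraph V} (hT : T.IsTree) (r : V) {u v : V}
    (h : T.Adj u v) : T.dist r v = T.dist r u + 1 ∨ T.dist r u = T.dist r v + 1 := by
  obtain ⟨p, hp, hl⟩ := hT.isConnected.exists_path_of_dist r u
  by_cases hv : v ∈ p.support
  · right
    have hQ := tree_walk_length_eq_dist hT _ (hp.takeUntil hv)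
    have hedge : (Walk.cons h.symm Walk.nil : T.Walk v u).IsPath := by
      simp [Walk.cons_isPath_iff, h.ne']
    have hR : p.dropUntil v hv = Walk.cons h.symm Walk.nil :=
      (hT.existsUnique_path v u).unique (hp.dropUntil hv) hedge
    have hTake := congrArg Walk.length (p.take_spec hv)
    rw [Walk.length_append, hR] at hTake
    simp only [Walk.length_cons, Walk.length_nil] at hTake
    omega
  · left
    have hW : (Walk.cons h.symm p.reverse : T.Walk v r).IsPath := by
      rw [Walk.cons_isPath_iff]
      exact ⟨hp.reverse, by simpa [Walk.support_reverse] using hv⟩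
    have := tree_walk_length_eq_dist hT _ hW.reverse
    simp only [Walk.length_reverse, Walk.length_cons] at this
    omega

lemma tree_parent_unique {V : Type*} [DecidableEq V] {T : SimpleGraph V} (hT : T.IsTree) (r : V)
    {v u₁ u₂ : V} (h₁ : T.Adj v u₁) (h₂ : T.Adj v u₂)
    (d₁ : T.dist r u₁ + 1 = T.dist r v) (d₂ : T.dist r u₂ + 1 = T.dist r v) : u₁ = u₂ := by
  obtain ⟨p₁, hp₁, hl₁⟩ := hT.isConnected.exists_path_of_dist r u₁
  obtain ⟨p₂, hp₂, hl₂⟩ := hT.isConnected.exists_path_of_dist r u₂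
  have hv₁ : v ∉ p₁.support := by
    intro hv
    have ha := tree_walk_length_eq_dist hT _ (hp₁.takeUntil hv)
    have hb := Walk.length_takeUntil_le p₁ hv
    omega
  have hv₂ : v ∉ p₂.support := by
    intro hv
    have ha := tree_walk_length_eq_dist hT _ (hp₂.takeUntil hv)
    have hb := Walk.length_takeUntil_le p₂ hv
    omega
  have hW₁ : (Walk.cons h₁ p₁.reverse : T.Walk v r).IsPath := by
    rw [Walk.cons_isPath_iff]
    exact ⟨hp₁.reverse, by simpa [Walk.support_reverse] using hv₁⟩
  have hW₂ : (Walk.cons h₂ p₂.reverse : T.Walk v r).IsPath := by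
    rw [Walk.cons_isPath_iff]
    exact ⟨hp₂.reverse, by simpa [Walk.support_reverse] using hv₂⟩
  have heq : (Walk.cons h₁ p₁.reverse : T.Walk v r) = Walk.cons h₂ p₂.reverse :=
    (hT.existsUnique_path v r).unique hW₁ hW₂
  have := congrArg (fun w : T.Walk v r => w.getVert 1) heq
  simpa [Walk.getVert_cons_succ] using this



/-- `M` is an induced matching of the bipartite graph `G[A, Ā]`. -/
def IsInducedMatchingBetween {V : Type*} [DecidableEq V] (G : SimpleGraph V)
    (A : Finset V) (M : Finset (V × V)) : Prop :=
  (∀ p ∈ M, p.1 ∈ A ∧ p.2 ∉ A ∧ G.Adj p.1 p.2) ∧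
  (∀ p ∈ M, ∀ q ∈ M, p ≠ q →
    p.1 ≠ q.1 ∧ p.2 ≠ q.2 ∧ ¬ G.Adj p.1 q.2 ∧ ¬ G.Adj q.1 p.2)

/-- `mim(A)`: the maximum size of an induced matching of `G[A, Ā]`. -/
noncomputable def mim {V : Type*} [Fintype V] [DecidableEq V] (G : SimpleGraph V)
    (A : Finset V) : ℕ :=
  sSup {n | ∃ M : Finset (V × V), IsInducedMatchingBetween G A M ∧ M.card = n}

/-- If `X ⊆ A` is `R'`-important (there is `Y ⊆ Ā` with `Y ≡_{Ā}^2 R'` such that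
`G[X ∪ Y]` is a tree), then `|X^{2+}| ≤ 2·mim(A)`, where `X^{2+}` is the set of vertices
of `X` with at least two neighbors in `R'`. -/


theorem card_X2plus_le_two_mim {V : Type*} [Fintype V] [DecidableEq V]
    (G : SimpleGraph V) [DecidableRel G.Adj] (A X R' : Finset V)
    (hX : X ⊆ A) (hR' : R' ⊆ Aᶜ)
    (himp : ∃ Y : Finset V, Y ⊆ Aᶜ ∧ nequiv G 2 Aᶜ Y R' ∧
      (G.induce ((X ∪ Y : Finset V) : Set V)).IsTree) :
    (X.filter (fun v => 2 ≤ (G.neighborFinset v ∩ R').card)).card ≤ 2 * mim G A := by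
  classical
  obtain ⟨Y, hYA, hnequiv, hTree⟩ := himp
  set X2 : Finset V := X.filter (fun v => 2 ≤ (G.neighborFinset v ∩ R').card) with hX2def
  set SXY : Set V := ((X ∪ Y : Finset V) : Set V) with hSXY
  set T := G.induce SXY with hTdef
  obtain ⟨r⟩ := hTree.isConnected.nonempty
  have hmemS : ∀ {x : V}, x ∈ X ∪ Y → x ∈ SXY := by
    intro x hx; rw [hSXY]; exact Finset.mem_coe.mpr hx
  -- every vertex of X2 has at least two G-neighbors in Y
  have h2Y : ∀ v ∈ X2, 2 ≤ (G.neighborFinset v ∩ Y).card := by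
    intro v hv
    rw [hX2def, Finset.mem_filter] at hv
    have hvA : v ∉ Aᶜ := by simp [Finset.mem_compl, hX hv.1]
    have h := hnequiv v hvA
    rw [min_eq_left hv.2] at h
    exact min_eq_left_iff.mp h
  have hadjT : ∀ (a b : SXY), T.Adj a b ↔ G.Adj ↑a ↑b := by
    intro a b; rw [hTdef]; exact Iff.rfl
  -- child choice
  have hchild : ∀ v : SXY, (v : V) ∈ X2 →
      ∃ y : SXY, T.Adj v y ∧ (y : V) ∈ Y ∧ T.dist r y = T.dist r v + 1 := by
    intro v hv
    obtain ⟨y₁, hy₁, y₂, hy₂, hne12⟩ :=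
      Finset.one_lt_card.mp
        (show 1 < (G.neighborFinset (v : V) ∩ Y).card by have := h2Y _ hv; omega)
    rw [Finset.mem_inter, SimpleGraph.mem_neighborFinset] at hy₁ hy₂
    set z₁ : SXY := ⟨y₁, hmemS (Finset.mem_union_right _ hy₁.2)⟩ with hz₁
    set z₂ : SXY := ⟨y₂, hmemS (Finset.mem_union_right _ hy₂.2)⟩ with hz₂
    have ha₁ : T.Adj v z₁ := (hadjT _ _).mpr hy₁.1
    have ha₂ : T.Adj v z₂ := (hadjT _ _).mpr hy₂.1
    rcases tree_adj_dist hTree r ha₁ with hc | hp₁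
    · exact ⟨z₁, ha₁, hy₁.2, hc⟩
    rcases tree_adj_dist hTree r ha₂ with hc | hp₂
    · exact ⟨z₂, ha₂, hy₂.2, hc⟩
    · exfalso
      apply hne12
      have : z₁ = z₂ := tree_parent_unique hTree r ha₁ ha₂ (by omega) (by omega)
      exact congrArg Subtype.val this
  let f : SXY → SXY := fun v => if h : (v : V) ∈ X2 then (hchild v h).choose else v
  have hf : ∀ (v : SXY) (_ : (v : V) ∈ X2),
      T.Adj v (f v) ∧ ((f v : V) ∈ Y) ∧ T.dist r (f v) = T.dist r v + 1 := by
    intro v h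
    simp only [f, dif_pos h]
    exact (hchild v h).choose_spec
  have hinj : ∀ (v w : SXY), (v : V) ∈ X2 → (w : V) ∈ X2 → f v = f w → v = w := by
    intro v w hv hw hfe
    obtain ⟨ha, _, hd⟩ := hf v hv
    obtain ⟨ha', _, hd'⟩ := hf w hw
    have haw : T.Adj (f v) w := by rw [hfe]; exact ha'.symm
    have hdw : T.dist r w + 1 = T.dist r (f v) := by rw [hfe]; omega
    exact tree_parent_unique hTree r ha.symm haw (by omega) hdw
  have hconf : ∀ (v w : SXY), (v : V) ∈ X2 → (w : V) ∈ X2 → T.Adj v (f w) →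
      v = w ∨ T.dist r v = T.dist r w + 2 := by
    intro v w hv hw hadj
    obtain ⟨ha', _, hd'⟩ := hf w hw
    rcases tree_adj_dist hTree r hadj with h1 | h2
    · exact Or.inl (tree_parent_unique hTree r hadj.symm ha'.symm (by omega) (by omega))
    · right; omega
  -- lift X2 to the subtype
  set X2a : Finset SXY := Finset.univ.filter (fun v : SXY => (v : V) ∈ X2) with hX2a
  have hcard : X2.card = X2a.card := by
    have himg : X2a.image Subtype.val = X2 := by
      ext x
      simp only [hX2a, Finset.mem_image, Finset.mem_filter, Finset.mem_univ, true_and]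
      constructor
      · rintro ⟨v, hv, rfl⟩; exact hv
      · intro hx
        have hxX : x ∈ X := (Finset.mem_filter.mp (hX2def ▸ hx)).1
        exact ⟨⟨x, hmemS (Finset.mem_union_left _ hxX)⟩, hx, rfl⟩
    rw [← himg, Finset.card_image_of_injective _ Subtype.val_injective]
  -- key: a conflict-free subset yields an induced matching
  have key : ∀ S : Finset SXY, S ⊆ X2a →
      (∀ v ∈ S, ∀ w ∈ S, T.dist r v ≠ T.dist r w + 2) → S.card ≤ mim G A := by
    intro S hS hcl
    set M : Finset (V × V) := S.image (fun v : SXY => ((v : V), (f v : V))) with hMdef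
    have hmemX2 : ∀ v ∈ S, (v : V) ∈ X2 := by
      intro v hv
      have := hS hv
      rw [hX2a, Finset.mem_filter] at this
      exact this.2
    have hMcard : M.card = S.card := Finset.card_image_of_injOn (by
      intro v hv w hw he
      exact Subtype.ext (congrArg Prod.fst he))
    have hM : IsInducedMatchingBetween G A M := by
      constructor
      · intro p hp
        obtain ⟨v, hv, rfl⟩ := Finset.mem_image.mp hp
        have hvX2 := hmemX2 v hv
        obtain ⟨ha, hy, _⟩ := hf v hvX2
        refine ⟨hX (Finset.mem_filter.mp (hX2def ▸ hvX2)).1, ?_, (hadjT _ _).mp ha⟩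
        have := hYA hy
        simpa [Finset.mem_compl] using this
      · intro p hp q hq hpq
        obtain ⟨v, hv, rfl⟩ := Finset.mem_image.mp hp
        obtain ⟨w, hw, rfl⟩ := Finset.mem_image.mp hq
        have hvX2 := hmemX2 v hv
        have hwX2 := hmemX2 w hw
        have hvw : v ≠ w := fun h => hpq (by rw [h])
        refine ⟨fun h => hvw (Subtype.ext h),
          fun h => hvw (hinj v w hvX2 hwX2 (Subtype.ext h)), ?_, ?_⟩
        · intro hadj
          have hT' : T.Adj v (f w) := (hadjT _ _).mpr hadj
          rcases hconf v w hvX2 hwX2 hT' with h | h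
          · exact hvw h
          · exact hcl v hv w hw h
        · intro hadj
          have hT' : T.Adj w (f v) := (hadjT _ _).mpr hadj
          rcases hconf w v hwX2 hvX2 hT' with h | h
          · exact hvw h.symm
          · exact hcl w hw v hv h
    rw [← hMcard]
    apply le_csSup
    · refine ⟨Fintype.card (V × V), ?_⟩
      rintro n ⟨N, -, rfl⟩
      simpa using N.card_le_univ
    · exact ⟨M, hM, rfl⟩
  set S1 := X2a.filter (fun v : SXY => T.dist r v % 4 = 0 ∨ T.dist r v % 4 = 1) with hS1
  set S2 := X2a.filter (fun v : SXY => ¬(T.dist r v % 4 = 0 ∨ T.dist r v % 4 = 1)) with hS2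
  have hsplit : S1.card + S2.card = X2a.card :=
    Finset.card_filter_add_card_filter_not _
  have h1 : S1.card ≤ mim G A := by
    refine key S1 (Finset.filter_subset _ _) ?_
    intro v hv w hw hd
    have hv' := (Finset.mem_filter.mp hv).2
    have hw' := (Finset.mem_filter.mp hw).2
    omega
  have h2 : S2.card ≤ mim G A := by
    refine key S2 (Finset.filter_subset _ _) ?_
    intro v hv w hw hd
    have hv' := (Finset.mem_filter.mp hv).2
    have hw' := (Finset.mem_filter.mp hw).2
    omega
  calc X2.card = X2a.card := hcard
    _ = S1.card + S2.card := hsplit.symm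
    _ ≤ mim G A + mim G A := add_le_add h1 h2
    _ = 2 * mim G A := (two_mul _).symm
end

section
/- Let G be an n-vertex graph, A ⊆ V(G), and R' ⊆ V(G)\A. Define X^1 := { v ∈ X : |N(v)∩R'| = 1 } and X^{2+} := { v ∈ X : |N(v)∩R'| ≥ 2 } for X ⊆ A. Suppose X, W ⊆ A satisfy X^{2+} ≡_A^n W^{2+} and |E(G[X])| − |X \ X^1| = |E(G[W])| − |W \ W^1|. Then for every Y ⊆ V(G)\A with Y ≡_{V(G)\A}^2 R', if G[X ∪ Y] is a tree and G[W ∪ Y] is connected, then G[W ∪ Y] is a tree. -/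
/-! For `Z ⊆ A` disjoint from `Y`, `|E(G[Z ∪ Y])| = |E(G[Z])| + |E(G[Y])| + e(Z, Y)`, and since
every vertex of `Z^1` has exactly one neighbour in `Y` and every other vertex of `Z \ Z^{2+}` none,
`e(Z, Y) = |Z^1| + e(Z^{2+}, Y)`. The `n`-equivalence of `X^{2+}` and `W^{2+}` over `A` gives
`e(X^{2+}, Y) = e(W^{2+}, Y)`, so
`|E(G[Z ∪ Y])| − |Z ∪ Y| = (|E(G[Z])| − |Z \ Z^1|) + (|E(G[Y])| − |Y|) + e(Z^{2+}, Y)`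
takes the same value for `Z = X` and `Z = W`. The tree `G[X ∪ Y]` makes it `−1`, and a connected
graph with one edge fewer than vertices is a tree. -/

open SimpleGraph Finset

/-- The set of edges of `G` with both endpoints in `S`. -/
def edgesWithin {V : Type*} [Fintype V] [DecidableEq V] (G : SimpleGraph V)
    [DecidableRel G.Adj] (S : Finset V) : Finset (Sym2 V) :=
  G.edgeFinset.filter (fun e => ∃ x ∈ S, ∃ y ∈ S, e = s(x, y))

namespace SimpleGraph

variable {V : Type*} [Fintype V] [DecidableEq V] (G : SimpleGraph V) [DecidableRel G.Adj]

lemma edgesWithin_eq_inter_sym2 (S : Finset V) : edgesWithin G S = G.edgeFinset ∩ S.sym2 := by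
  ext e
  induction e with
  | _ x y =>
    simp only [edgesWithin, mem_filter, mem_inter, mk_mem_sym2_iff]
    refine and_congr_right fun _ => ⟨?_, fun h => ⟨x, h.1, y, h.2, rfl⟩⟩
    rintro ⟨x', hx', y', hy', h⟩
    exact mk_mem_sym2_iff.1 (h ▸ mk_mem_sym2_iff.2 ⟨hx', hy'⟩)

lemma card_edgeSet_induce (S : Finset V) :
    Nat.card (G.induce (S : Set V)).edgeSet = #(edgesWithin G S) := by
  have h := congrArg card (G.map_edgeFinset_induce (s := (S : Set V)))
  rw [card_map, Finset.toFinset_coe, ← edgesWithin_eq_inter_sym2] at h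
  rw [Nat.card_eq_fintype_card, ← edgeFinset_card]
  convert h

lemma isTree_induce_iff (S : Finset V) :
    (G.induce (S : Set V)).IsTree ↔
      (G.induce (S : Set V)).Connected ∧ #(edgesWithin G S) + 1 = #S := by
  rw [isTree_iff_connected_and_card, card_edgeSet_induce, Nat.card_coe_set_eq,
    Set.ncard_coe_finset]

lemma sum_card_neighborFinset_inter_self (S : Finset V) :
    ∑ v ∈ S, #(G.neighborFinset v ∩ S) = 2 * #(edgesWithin G S) := by
  rw [← card_edgeSet_induce, Nat.card_eq_fintype_card, ← edgeFinset_card,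
    ← sum_degrees_eq_twice_card_edges, ← Finset.sum_coe_sort S]
  refine Fintype.sum_congr _ _ fun v => ?_
  have h := congrArg card (G.map_neighborFinset_induce (s := (S : Set V)) v)
  rw [card_map, Finset.toFinset_coe, card_neighborFinset_eq_degree] at h
  convert h.symm

lemma sum_card_neighborFinset_inter_comm (X Y : Finset V) :
    ∑ v ∈ X, #(G.neighborFinset v ∩ Y) = ∑ u ∈ Y, #(G.neighborFinset u ∩ X) := by
  convert sum_card_bipartiteAbove_eq_sum_card_bipartiteBelow (r := G.Adj) using 3 with v _ u _
  · ext; simp [bipartiteAbove, and_comm]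
  · ext; simp [bipartiteBelow, and_comm, adj_comm]

lemma card_edgesWithin_union {Z Y : Finset V} (h : Disjoint Z Y) :
    #(edgesWithin G (Z ∪ Y)) =
      #(edgesWithin G Z) + #(edgesWithin G Y) + ∑ v ∈ Z, #(G.neighborFinset v ∩ Y) := by
  have hsplit : ∀ v, #(G.neighborFinset v ∩ (Z ∪ Y)) =
      #(G.neighborFinset v ∩ Z) + #(G.neighborFinset v ∩ Y) := fun v => by
    rw [inter_union_distrib_left,
      card_union_of_disjoint (h.mono inter_subset_right inter_subset_right)]
  have := G.sum_card_neighborFinset_inter_self (Z ∪ Y)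
  simp only [sum_union h, hsplit, sum_add_distrib, sum_card_neighborFinset_inter_self,
    G.sum_card_neighborFinset_inter_comm Y Z] at this
  omega

end SimpleGraph

section NeighborEquivalence

variable {V : Type*} [Fintype V] [DecidableEq V] {G : SimpleGraph V} [DecidableRel G.Adj]

lemma nequiv.card_inter_eq {d : ℕ} {A P Q : Finset V} (h : nequiv G d A P Q)
    (hd : Fintype.card V ≤ d) {u : V} (hu : u ∉ A) :
    #(G.neighborFinset u ∩ P) = #(G.neighborFinset u ∩ Q) := by
  have hP := card_le_univ (G.neighborFinset u ∩ P)
  have hQ := card_le_univ (G.neighborFinset u ∩ Q)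
  have := h u hu
  omega

lemma nequiv.sum_card_inter_eq {d : ℕ} {A P Q : Finset V} (h : nequiv G d A P Q)
    (hd : Fintype.card V ≤ d) {Y : Finset V} (hY : Y ⊆ Aᶜ) :
    ∑ v ∈ P, #(G.neighborFinset v ∩ Y) = ∑ v ∈ Q, #(G.neighborFinset v ∩ Y) := by
  rw [G.sum_card_neighborFinset_inter_comm P, G.sum_card_neighborFinset_inter_comm Q]
  exact sum_congr rfl fun u hu => h.card_inter_eq hd (mem_compl.1 (hY hu))

lemma nequiv.sum_card_inter_eq_card_add_sum {A Y R : Finset V} (h : nequiv G 2 Aᶜ Y R)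
    {Z : Finset V} (hZ : Z ⊆ A) :
    ∑ v ∈ Z, #(G.neighborFinset v ∩ Y) = #{v ∈ Z | #(G.neighborFinset v ∩ R) = 1} +
      ∑ v ∈ Z with 2 ≤ #(G.neighborFinset v ∩ R), #(G.neighborFinset v ∩ Y) := by
  rw [card_filter, sum_filter, ← sum_add_distrib]
  refine sum_congr rfl fun v hv => ?_
  have := h v (by simpa using hZ hv)
  split_ifs <;> omega

end NeighborEquivalence

theorem tree_of_connected_of_equiv_general {V : Type*} [Fintype V] [DecidableEq V]
    (G : SimpleGraph V) [DecidableRel G.Adj] (A X W R' : Finset V)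
    (hX : X ⊆ A) (hW : W ⊆ A)
    (h2p : nequiv G (Fintype.card V) A
      (X.filter (fun v => 2 ≤ (G.neighborFinset v ∩ R').card))
      (W.filter (fun v => 2 ≤ (G.neighborFinset v ∩ R').card)))
    (hedges : ((edgesWithin G X).card : ℤ) -
        ((X \ X.filter (fun v => (G.neighborFinset v ∩ R').card = 1)).card : ℤ) =
      ((edgesWithin G W).card : ℤ) -
        ((W \ W.filter (fun v => (G.neighborFinset v ∩ R').card = 1)).card : ℤ))
    (Y : Finset V) (hY : Y ⊆ Aᶜ) (heq : nequiv G 2 Aᶜ Y R')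
    (htree : (G.induce ((X ∪ Y : Finset V) : Set V)).IsTree)
    (hconn : (G.induce ((W ∪ Y : Finset V) : Set V)).Connected) :
    (G.induce ((W ∪ Y : Finset V) : Set V)).IsTree := by
  have hXY : Disjoint X Y := disjoint_compl_right.mono hX hY
  have hWY : Disjoint W Y := disjoint_compl_right.mono hW hY
  have hX1 := card_sdiff_add_card_eq_card
    (filter_subset (fun v => #(G.neighborFinset v ∩ R') = 1) X)
  have hW1 := card_sdiff_add_card_eq_card
    (filter_subset (fun v => #(G.neighborFinset v ∩ R') = 1) W)
  have hXcross := heq.sum_card_inter_eq_card_add_sum hX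
  have hWcross := heq.sum_card_inter_eq_card_add_sum hW
  have h2cross := h2p.sum_card_inter_eq le_rfl hY
  rw [SimpleGraph.isTree_induce_iff, card_union_of_disjoint hXY,
    G.card_edgesWithin_union hXY] at htree
  rw [SimpleGraph.isTree_induce_iff, card_union_of_disjoint hWY, G.card_edgesWithin_union hWY]
  exact ⟨hconn, by omega⟩

/-- Suppose `X, W ⊆ A` satisfy `X^{2+} ≡_A^n W^{2+}` and
`|E(G[X])| − |X \ X^1| = |E(G[W])| − |W \ W^1|`. Then for every `Y ⊆ Ā` with
`Y ≡_{Ā}^2 R'`, if `G[X ∪ Y]` is a tree and `G[W ∪ Y]` is connected, then `G[W ∪ Y]`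
is a tree. -/
theorem tree_of_connected_of_equiv {V : Type*} [Fintype V] [DecidableEq V]
    (G : SimpleGraph V) [DecidableRel G.Adj] (A X W R' : Finset V)
    (hX : X ⊆ A) (hW : W ⊆ A) (hR' : R' ⊆ Aᶜ)
    (h2p : nequiv G (Fintype.card V) A
      (X.filter (fun v => 2 ≤ (G.neighborFinset v ∩ R').card))
      (W.filter (fun v => 2 ≤ (G.neighborFinset v ∩ R').card)))
    (hedges : ((edgesWithin G X).card : ℤ) -
        ((X \ X.filter (fun v => (G.neighborFinset v ∩ R').card = 1)).card : ℤ) =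
      ((edgesWithin G W).card : ℤ) -
        ((W \ W.filter (fun v => (G.neighborFinset v ∩ R').card = 1)).card : ℤ))
    (Y : Finset V) (hY : Y ⊆ Aᶜ) (heq : nequiv G 2 Aᶜ Y R')
    (htree : (G.induce ((X ∪ Y : Finset V) : Set V)).IsTree)
    (hconn : (G.induce ((W ∪ Y : Finset V) : Set V)).Connected) :
    (G.induce ((W ∪ Y : Finset V) : Set V)).IsTree :=
  tree_of_connected_of_equiv_general G A X W R' hX hW h2p hedges Y hY heq htree hconn
end

section
/- Let a layout edge split V(G) into V_a, V_b (disjoint) and the rest Ā, with V_x = V_a ∪ V_b. Let A, X ⊆ V_a with A ≡_{V_a}^n X and B, W ⊆ V_b with B ≡_{V_b}^n W (n = |V(G)|). Then the number of edges of G between X ∪ W and V_x \ (X ∪ W) equals |E(X, V_a\X)| + |E(W, V_b\W)| + |E(A, V_b\B)| + |E(B, V_a\A)|. -/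
/-- The set of edges of `G` with one endpoint in `S` and the other in `T`. -/
def edgesBetween {V : Type*} [Fintype V] [DecidableEq V] (G : SimpleGraph V)
    [DecidableRel G.Adj] (S T : Finset V) : Finset (Sym2 V) :=
  G.edgeFinset.filter (fun e => ∃ x ∈ S, ∃ y ∈ T, e = s(x, y))

section Helpers

set_option linter.unusedSectionVars false

variable {V : Type*} [Fintype V] [DecidableEq V] (G : SimpleGraph V) [DecidableRel G.Adj]

lemma edgesBetween_comm (S T : Finset V) : edgesBetween G S T = edgesBetween G T S := by
  unfold edgesBetween
  apply Finset.filter_congr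
  intro e _
  constructor
  · rintro ⟨x, hx, y, hy, rfl⟩; exact ⟨y, hy, x, hx, Sym2.eq_swap⟩
  · rintro ⟨x, hx, y, hy, rfl⟩; exact ⟨y, hy, x, hx, Sym2.eq_swap⟩

lemma card_edgesBetween (S T : Finset V) (h : Disjoint S T) :
    (edgesBetween G S T).card = ∑ t ∈ T, (G.neighborFinset t ∩ S).card := by
  have hsum : ∑ t ∈ T, (G.neighborFinset t ∩ S).card
      = ((T ×ˢ S).filter (fun p => G.Adj p.1 p.2)).card := by
    rw [Finset.card_filter, Finset.sum_product]
    apply Finset.sum_congr rfl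
    intro t _
    have : G.neighborFinset t ∩ S = S.filter (fun s => G.Adj t s) := by
      ext v; simp [Finset.mem_inter, and_comm]
    rw [this, Finset.card_filter]
  rw [hsum]
  symm
  apply Finset.card_bij (fun p _ => s(p.2, p.1))
  · rintro ⟨t, s⟩ hp
    simp only [Finset.mem_filter, Finset.mem_product] at hp
    obtain ⟨⟨ht, hs⟩, hadj⟩ := hp
    simp only [edgesBetween, Finset.mem_filter, SimpleGraph.mem_edgeFinset,
      SimpleGraph.mem_edgeSet]
    exact ⟨hadj.symm, s, hs, t, ht, rfl⟩
  · rintro ⟨t1, s1⟩ hp1 ⟨t2, s2⟩ hp2 heq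
    simp only [Finset.mem_filter, Finset.mem_product] at hp1 hp2
    rw [Sym2.eq_iff] at heq
    rcases heq with ⟨h1, h2⟩ | ⟨h1, h2⟩ <;> dsimp only at h1 h2
    · exact Prod.ext h2 h1
    · exact (Finset.disjoint_left.mp h (h1 ▸ hp1.1.2) hp2.1.1).elim
  · intro e he
    simp only [edgesBetween, Finset.mem_filter, SimpleGraph.mem_edgeFinset,
      SimpleGraph.mem_edgeSet] at he
    obtain ⟨he1, x, hx, y, hy, rfl⟩ := he
    refine ⟨(y, x), ?_, rfl⟩
    simp only [Finset.mem_filter, Finset.mem_product]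
    exact ⟨⟨hy, hx⟩, (SimpleGraph.mem_edgeSet G |>.mp he1).symm⟩

lemma inter_sdiff_eq' (s t u : Finset V) : s ∩ (t \ u) = (s ∩ t) \ (s ∩ u) := by
  ext x; simp only [Finset.mem_inter, Finset.mem_sdiff, Finset.mem_inter]; tauto

lemma card_inter_sdiff_eq {Vb B W : Finset V} (hB : B ⊆ Vb) (hW : W ⊆ Vb) (u : V)
    (hEq : (G.neighborFinset u ∩ B).card = (G.neighborFinset u ∩ W).card) :
    (G.neighborFinset u ∩ (Vb \ W)).card = (G.neighborFinset u ∩ (Vb \ B)).card := by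
  rw [inter_sdiff_eq', inter_sdiff_eq',
    Finset.card_sdiff_of_subset (Finset.inter_subset_inter (Finset.Subset.refl _) hW),
    Finset.card_sdiff_of_subset (Finset.inter_subset_inter (Finset.Subset.refl _) hB), hEq]

end Helpers

/-- For disjoint `V_a, V_b` with `V_x = V_a ∪ V_b`: if `X ≡_{V_a}^n A` and `W ≡_{V_b}^n B`
then `|E(X ∪ W, V_x \ (X ∪ W))| = |E(X, V_a\X)| + |E(W, V_b\W)| + |E(A, V_b\B)| + |E(B, V_a\A)|`. -/
theorem card_cut_eq_of_nequiv {V : Type*} [Fintype V] [DecidableEq V]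
    (G : SimpleGraph V) [DecidableRel G.Adj] (Va Vb : Finset V) (hdisj : Disjoint Va Vb)
    (A X : Finset V) (hA : A ⊆ Va) (hX : X ⊆ Va)
    (B W : Finset V) (hB : B ⊆ Vb) (hW : W ⊆ Vb)
    (hAX : nequiv G (Fintype.card V) Va A X)
    (hBW : nequiv G (Fintype.card V) Vb B W) :
    (edgesBetween G (X ∪ W) ((Va ∪ Vb) \ (X ∪ W))).card =
      (edgesBetween G X (Va \ X)).card + (edgesBetween G W (Vb \ W)).card +
      (edgesBetween G A (Vb \ B)).card + (edgesBetween G B (Va \ A)).card := by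
  classical
  have hle : ∀ (u : V) (s : Finset V), (G.neighborFinset u ∩ s).card ≤ Fintype.card V :=
    fun u s => le_of_le_of_eq (Finset.card_le_univ _) Finset.card_univ
  have hAX' : ∀ u ∉ Va, (G.neighborFinset u ∩ A).card = (G.neighborFinset u ∩ X).card := by
    intro u hu
    have h := hAX u hu
    rwa [min_eq_right (hle u A), min_eq_right (hle u X)] at h
  have hBW' : ∀ u ∉ Vb, (G.neighborFinset u ∩ B).card = (G.neighborFinset u ∩ W).card := by
    intro u hu
    have h := hBW u hu
    rwa [min_eq_right (hle u B), min_eq_right (hle u W)] at h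
  have hXW : Disjoint X W := hdisj.mono hX hW
  have d1 : Disjoint X (Va \ X) := Finset.disjoint_sdiff
  have d2 : Disjoint X (Vb \ W) := hdisj.mono hX Finset.sdiff_subset
  have d3 : Disjoint W (Va \ X) := hdisj.symm.mono hW Finset.sdiff_subset
  have d4 : Disjoint W (Vb \ W) := Finset.disjoint_sdiff
  have dT : Disjoint (Va \ X) (Vb \ W) := hdisj.mono Finset.sdiff_subset Finset.sdiff_subset
  have hset : (Va ∪ Vb) \ (X ∪ W) = (Va \ X) ∪ (Vb \ W) := by
    ext v
    simp only [Finset.mem_sdiff, Finset.mem_union, not_or]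
    constructor
    · rintro ⟨hv | hv, hx, hw⟩
      · exact Or.inl ⟨hv, hx⟩
      · exact Or.inr ⟨hv, hw⟩
    · rintro (⟨hv, hx⟩ | ⟨hv, hw⟩)
      · exact ⟨Or.inl hv, hx, fun hw => Finset.disjoint_left.mp hdisj hv (hW hw)⟩
      · exact ⟨Or.inr hv, fun hx => Finset.disjoint_left.mp hdisj (hX hx) hv, hw⟩
  have hdL : Disjoint (X ∪ W) ((Va \ X) ∪ (Vb \ W)) := by
    simp only [Finset.disjoint_union_left, Finset.disjoint_union_right]
    exact ⟨⟨d1, d3⟩, ⟨d2, d4⟩⟩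
  rw [hset, card_edgesBetween G _ _ hdL, Finset.sum_union dT]
  have hsplit : ∀ t : V, (G.neighborFinset t ∩ (X ∪ W)).card =
      (G.neighborFinset t ∩ X).card + (G.neighborFinset t ∩ W).card := by
    intro t
    rw [Finset.inter_union_distrib_left]
    exact Finset.card_union_of_disjoint
      (hXW.mono Finset.inter_subset_right Finset.inter_subset_right)
  simp only [hsplit, Finset.sum_add_distrib]
  -- term 1
  have T1 : ∑ t ∈ Va \ X, (G.neighborFinset t ∩ X).card = (edgesBetween G X (Va \ X)).card :=
    (card_edgesBetween G X (Va \ X) d1).symm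
  -- term 4
  have T4 : ∑ t ∈ Vb \ W, (G.neighborFinset t ∩ W).card = (edgesBetween G W (Vb \ W)).card :=
    (card_edgesBetween G W (Vb \ W) d4).symm
  -- term 3 : sum over Vb\W of |N ∩ X| = |E(A, Vb\B)|
  have T3 : ∑ t ∈ Vb \ W, (G.neighborFinset t ∩ X).card = (edgesBetween G A (Vb \ B)).card := by
    have step1 : ∑ t ∈ Vb \ W, (G.neighborFinset t ∩ X).card
        = ∑ t ∈ Vb \ W, (G.neighborFinset t ∩ A).card := by
      apply Finset.sum_congr rfl
      intro t ht
      have htVa : t ∉ Va := fun h =>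
        Finset.disjoint_left.mp hdisj h (Finset.mem_sdiff.mp ht).1
      exact (hAX' t htVa).symm
    have dA : Disjoint A (Vb \ W) := hdisj.mono hA Finset.sdiff_subset
    have dA' : Disjoint (Vb \ W) A := dA.symm
    have step2 : ∑ t ∈ Vb \ W, (G.neighborFinset t ∩ A).card
        = ∑ a ∈ A, (G.neighborFinset a ∩ (Vb \ W)).card := by
      rw [← card_edgesBetween G A (Vb \ W) dA, edgesBetween_comm,
        card_edgesBetween G (Vb \ W) A dA']
    have step3 : ∑ a ∈ A, (G.neighborFinset a ∩ (Vb \ W)).card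
        = ∑ a ∈ A, (G.neighborFinset a ∩ (Vb \ B)).card := by
      apply Finset.sum_congr rfl
      intro a ha
      exact card_inter_sdiff_eq G hB hW a
        (hBW' a (fun h => Finset.disjoint_left.mp hdisj (hA ha) h))
    have dB : Disjoint (Vb \ B) A := (hdisj.mono hA Finset.sdiff_subset).symm
    rw [step1, step2, step3, ← card_edgesBetween G (Vb \ B) A dB, edgesBetween_comm]
  -- term 2 : sum over Va\X of |N ∩ W| = |E(B, Va\A)|
  have T2 : ∑ t ∈ Va \ X, (G.neighborFinset t ∩ W).card = (edgesBetween G B (Va \ A)).card := by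
    have step1 : ∑ t ∈ Va \ X, (G.neighborFinset t ∩ W).card
        = ∑ t ∈ Va \ X, (G.neighborFinset t ∩ B).card := by
      apply Finset.sum_congr rfl
      intro t ht
      have htVb : t ∉ Vb := fun h =>
        Finset.disjoint_left.mp hdisj (Finset.mem_sdiff.mp ht).1 h
      exact (hBW' t htVb).symm
    have dA : Disjoint B (Va \ X) := hdisj.symm.mono hB Finset.sdiff_subset
    have step2 : ∑ t ∈ Va \ X, (G.neighborFinset t ∩ B).card
        = ∑ b ∈ B, (G.neighborFinset b ∩ (Va \ X)).card := by
      rw [← card_edgesBetween G B (Va \ X) dA, edgesBetween_comm,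
        card_edgesBetween G (Va \ X) B dA.symm]
    have step3 : ∑ b ∈ B, (G.neighborFinset b ∩ (Va \ X)).card
        = ∑ b ∈ B, (G.neighborFinset b ∩ (Va \ A)).card := by
      apply Finset.sum_congr rfl
      intro b hb
      exact card_inter_sdiff_eq G hA hX b
        (hAX' b (fun h => Finset.disjoint_left.mp hdisj h (hB hb)))
    have dB : Disjoint (Va \ A) B := hdisj.mono Finset.sdiff_subset hB
    rw [step1, step2, step3, ← card_edgesBetween G (Va \ A) B dB, edgesBetween_comm]
  rw [T1, T2, T3, T4]
  ring
end

section
/- For every k ∈ ℕ, let M_k be the 2^k × 2^k matrix with rows and columns indexed by subsets of [k], where M_k[S, T] = 1 if |S ∩ T| is even and 0 otherwise. Then the rank of M_k over ℚ equals 2^k, i.e., M_k is invertible over the rationals. -/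
/-!
Write `H S T = (-1) ^ |S ∩ T|` (the Walsh–Hadamard matrix) and `J` for the all-ones matrix, so
that `2 • M = J + H`. The rows of `H` are the characters of `(ℤ/2)^α`, hence `H * H = 2^|α| • 1`,
and since row `∅` of `H` is all ones, `J * H = 2^|α| • F` with `F S T = [T = ∅]`. Together with
`M * E = F` for `E` the matrix unit at `(∅, ∅)`, this gives `M⁻¹ = (2 / 2^|α|) • H - E` whenever
`2` is invertible.
-/

open Finset Matrix

variable {α : Type*} [DecidableEq α]

section CommRing

variable {R : Type*} [CommRing R]

variable (α R) in
def walshMatrix : Matrix (Finset α) (Finset α) R :=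
  of fun S T => (-1) ^ #(S ∩ T)

variable (α R) in
def evenIntersectionMatrix : Matrix (Finset α) (Finset α) R :=
  of fun S T => if Even #(S ∩ T) then 1 else 0

lemma neg_one_pow_card_inter (S T : Finset α) :
    (-1 : R) ^ #(S ∩ T) = ∏ i ∈ T, if i ∈ S then -1 else 1 := by
  rw [← prod_filter, filter_mem_eq_inter, prod_const, inter_comm]

lemma walshMatrix_mul_self_apply [Fintype α] (S T : Finset α) :
    (walshMatrix α R * walshMatrix α R) S T =
      ∏ i, ((if i ∈ S then -1 else 1) * (if i ∈ T then -1 else 1) + 1) := by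
  have h (U : Finset α) : walshMatrix α R S U * walshMatrix α R U T =
      ∏ i ∈ U, (if i ∈ S then -1 else 1) * (if i ∈ T then -1 else 1) := by
    rw [walshMatrix, of_apply, of_apply, inter_comm U, neg_one_pow_card_inter,
      neg_one_pow_card_inter, prod_mul_distrib]
  simp only [mul_apply, h, prod_add, prod_const_one, mul_one, powerset_univ]

theorem walshMatrix_mul_self [Fintype α] :
    walshMatrix α R * walshMatrix α R = (2 ^ Fintype.card α : R) • 1 := by
  ext S T
  rw [walshMatrix_mul_self_apply, Matrix.smul_apply, one_apply]
  split_ifs with hST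
  · subst hST
    have (i : α) : (if i ∈ S then (-1 : R) else 1) * (if i ∈ S then -1 else 1) + 1 = 2 := by
      split_ifs <;> norm_num
    rw [prod_congr rfl fun i _ => this i, prod_const, card_univ, smul_eq_mul, mul_one]
  · obtain ⟨i, hi⟩ : ∃ i, ¬(i ∈ S ↔ i ∈ T) := by
      by_contra! h
      exact hST (ext h)
    rw [smul_zero]
    refine prod_eq_zero (mem_univ i) ?_
    by_cases hS : i ∈ S <;> by_cases hT : i ∈ T <;> simp_all

lemma walshMatrix_empty_left (T : Finset α) : walshMatrix α R ∅ T = 1 := by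
  simp [walshMatrix]

lemma two_smul_evenIntersectionMatrix :
    (2 : R) • evenIntersectionMatrix α R = of (fun _ _ => 1) + walshMatrix α R := by
  ext S T
  simp only [Matrix.smul_apply, Matrix.add_apply, evenIntersectionMatrix, walshMatrix, of_apply]
  rcases Nat.even_or_odd #(S ∩ T) with h | h
  · simp [h, h.neg_one_pow, one_add_one_eq_two]
  · simp [Nat.not_even_iff_odd.mpr h, h.neg_one_pow]

lemma of_one_mul_walshMatrix [Fintype α] :
    of (fun _ _ => 1) * walshMatrix α R =
      (2 ^ Fintype.card α : R) • of fun _ T => if (∅ : Finset α) = T then 1 else 0 := by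
  ext S T
  have := congr_fun₂ (walshMatrix_mul_self (α := α) (R := R)) ∅ T
  simpa [mul_apply, walshMatrix_empty_left, one_apply] using this

lemma evenIntersectionMatrix_mul_single_empty [Fintype α] :
    evenIntersectionMatrix α R * single ∅ ∅ 1 =
      of fun _ T => if (∅ : Finset α) = T then 1 else 0 := by
  ext S T
  by_cases hT : ∅ = T
  · subst hT
    simp [evenIntersectionMatrix]
  · simp [mul_single_apply_of_ne (hbj := Ne.symm hT), hT]

end CommRing

variable {K : Type*} [Field K]

theorem evenIntersectionMatrix_mul_eq_one [Fintype α] (h2 : (2 : K) ≠ 0) :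
    evenIntersectionMatrix α K *
      ((2 / 2 ^ Fintype.card α : K) • walshMatrix α K - single ∅ ∅ 1) = 1 := by
  have hM : evenIntersectionMatrix α K =
      (2 : K)⁻¹ • (of (fun _ _ => 1) + walshMatrix α K) := by
    rw [← two_smul_evenIntersectionMatrix, smul_smul, inv_mul_cancel₀ h2, one_smul]
  have hc : 2 / 2 ^ Fintype.card α * 2⁻¹ * 2 ^ Fintype.card α = (1 : K) := by
    field_simp
  rw [mul_sub, evenIntersectionMatrix_mul_single_empty, mul_smul_comm]
  nth_rw 1 [hM]
  rw [smul_mul_assoc, add_mul, of_one_mul_walshMatrix, walshMatrix_mul_self, ← smul_add,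
    smul_smul, smul_smul, hc, one_smul, add_sub_cancel_left]

theorem isUnit_evenIntersectionMatrix [Fintype α] (h2 : (2 : K) ≠ 0) :
    IsUnit (evenIntersectionMatrix α K) :=
  (isUnit_iff_isUnit_det _).2 <|
    isUnit_det_of_right_inverse (evenIntersectionMatrix_mul_eq_one h2)

theorem rank_evenIntersectionMatrix [Fintype α] (h2 : (2 : K) ≠ 0) :
    (evenIntersectionMatrix α K).rank = 2 ^ Fintype.card α := by
  rw [rank_of_isUnit _ (isUnit_evenIntersectionMatrix h2), Fintype.card_finset]

/-- The matrix `M_k` over `ℚ`: rows and columns indexed by subsets of `[k]`,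
with entry 1 iff the intersection has even cardinality. Its rank over `ℚ` is `2^k`,
i.e. `M_k` is invertible over the rationals. -/
theorem rank_evenIntersectionMatrix_Q (k : ℕ) :
    (Matrix.of fun S T : Finset (Fin k) =>
      if Even (S ∩ T).card then (1 : ℚ) else 0).rank = 2 ^ k :=
  (rank_evenIntersectionMatrix two_ne_zero).trans (by rw [Fintype.card_fin])
end
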